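/- arXiv:2507.18114 — 5 statements merged into one kernel-verified Lean document; each statement's English description precedes it below -/
import Mathlib

section
/- Let n, m, l, M be positive integers and p = m + n. For each i = 1,…,M let A_i ∈ ℝ^{n×n} and B_{2,i} ∈ ℝ^{n×m}, and let B₁ ∈ ℝ^{n×l} with B₁B₁ᵀ positive definite. Suppose W ∈ 𝕊^p is positive semidefinite with block decomposition W = [[W₁, W₂],[W₂ᵀ, W₃]] (W₁ ∈ 𝕊^n, W₂ ∈ ℝ^{n×m}, W₃ ∈ 𝕊^m), W₁ is positive definite, and for every i the matrix A_iW₁ + W₁A_iᵀ + B_{2,i}W₂ᵀ + W₂B_{2,i}ᵀ + B₁B₁ᵀ is negative semidefinite (i.e. the top-left n×n block Θ_{i,1}(W) of F_iW + WF_iᵀ + Q is ⪯ 0). Then the feedback gain K = W₂ᵀW₁⁻¹ internally stabilizes every extreme system: for each i = 1,…,M, every eigenvalue of the closed-loop matrix A_i + B_{2,i}K has strictly negative real part. -/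
/-!
Let `Ac = A_i + B_{2,i} K` with `K = W₂ᵀ W₁⁻¹`. Since `K W₁ = W₂ᵀ`, the Lyapunov expression
`Ac W₁ + W₁ Acᵀ` equals `Θ_{i,1}(W) - B₁B₁ᵀ`, which is negative definite. If `w ≠ 0` is a
left eigenvector of `Ac` for `μ`, evaluating this form at `w̄` gives `2 Re μ · (w W₁ w̄) < 0`,
and `w W₁ w̄ > 0` because `W₁ ≻ 0`; hence `Re μ < 0`.
-/

open Matrix
open scoped ComplexOrder

namespace Matrix

variable {n : Type*} [Fintype n]

theorem exists_vecMul_eq_smul_of_mem_spectrum {K : Type*} [Field K] [DecidableEq n]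
    {X : Matrix n n K} {μ : K} (hμ : μ ∈ spectrum K X) : ∃ w ≠ 0, w ᵥ* X = μ • w := by
  have hdet : (algebraMap K (Matrix n n K) μ - X).det = 0 := by
    rwa [spectrum.mem_iff, isUnit_iff_isUnit_det, isUnit_iff_ne_zero, not_not] at hμ
  obtain ⟨w, hw0, hw⟩ := exists_vecMul_eq_zero_iff.mpr hdet
  refine ⟨w, hw0, ?_⟩
  rwa [vecMul_sub, sub_eq_zero, Algebra.algebraMap_eq_smul_one, vecMul_smul, vecMul_one,
    eq_comm] at hw

variable {𝕜 : Type*} [RCLike 𝕜]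

theorem re_neg_of_mem_spectrum_of_lyapunov [DecidableEq n] {X P : Matrix n n 𝕜} (hP : P.PosDef)
    (hXP : (-(X * P + P * Xᴴ)).PosDef) {μ : 𝕜} (hμ : μ ∈ spectrum 𝕜 X) : RCLike.re μ < 0 := by
  obtain ⟨w, hw0, hw⟩ := exists_vecMul_eq_smul_of_mem_spectrum hμ
  have hv0 : star w ≠ 0 := by simpa using hw0
  have hc := RCLike.pos_iff.mp (hP.dotProduct_mulVec_pos hv0)
  have hq := RCLike.pos_iff.mp (hXP.dotProduct_mulVec_pos hv0)
  rw [star_star] at hc hq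
  have hXH : Xᴴ *ᵥ star w = star μ • star w := by rw [← star_vecMul, hw, star_smul]
  have hform : w ⬝ᵥ (X * P + P * Xᴴ) *ᵥ star w = (μ + star μ) * (w ⬝ᵥ P *ᵥ star w) := by
    rw [add_mulVec, ← mulVec_mulVec, ← mulVec_mulVec, hXH, dotProduct_add, dotProduct_mulVec w X,
      hw, mulVec_smul, smul_dotProduct, dotProduct_smul, smul_eq_mul, smul_eq_mul, add_mul]
  rw [neg_mulVec, dotProduct_neg, hform, RCLike.star_def, RCLike.add_conj, map_neg,
    ← RCLike.ofReal_ofNat, ← RCLike.ofReal_mul, RCLike.re_ofReal_mul] at hq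
  nlinarith [hq.1, hc.1]

theorem PosSemidef.map_algebraMap {P : Matrix n n ℝ} (hP : P.PosSemidef) :
    (P.map (algebraMap ℝ 𝕜)).PosSemidef := by
  obtain ⟨m, v, rfl⟩ := posSemidef_iff_eq_sum_vecMulVec.mp hP
  refine posSemidef_iff_eq_sum_vecMulVec.mpr ⟨m, fun i ↦ algebraMap ℝ 𝕜 ∘ v i, ?_⟩
  ext a b
  simp [Matrix.sum_apply, vecMulVec_apply]

theorem PosDef.map_algebraMap [DecidableEq n] {P : Matrix n n ℝ} (hP : P.PosDef) :
    (P.map (algebraMap ℝ 𝕜)).PosDef :=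
  hP.posSemidef.map_algebraMap.posDef_iff_isUnit.mpr (hP.isUnit.map (algebraMap ℝ 𝕜).mapMatrix)

theorem re_neg_of_mem_spectrum_map_of_lyapunov [DecidableEq n] {X P : Matrix n n ℝ}
    (hP : P.PosDef) (hXP : (-(X * P + P * Xᵀ)).PosDef) {μ : 𝕜}
    (hμ : μ ∈ spectrum 𝕜 (X.map (algebraMap ℝ 𝕜))) : RCLike.re μ < 0 := by
  refine re_neg_of_mem_spectrum_of_lyapunov hP.map_algebraMap ?_ hμ
  convert hXP.map_algebraMap (𝕜 := 𝕜) using 1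
  have hXH : (X.map (algebraMap ℝ 𝕜))ᴴ = Xᵀ.map (algebraMap ℝ 𝕜) := by
    rw [← conjTranspose_map _ fun _ ↦ (RCLike.conj_ofReal _).symm,
      conjTranspose_eq_transpose_of_trivial]
  rw [hXH]
  simp only [← RingHom.mapMatrix_apply, map_neg, map_add, map_mul]

theorem closedLoop_mul_add_mul_transpose {m R : Type*} [Fintype m] [DecidableEq n] [CommRing R]
    (A W : Matrix n n R) (B V : Matrix n m R) (hW : Wᵀ = W) (hdet : IsUnit W.det) :
    (A + B * (Vᵀ * W⁻¹)) * W + W * (A + B * (Vᵀ * W⁻¹))ᵀ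
      = A * W + W * Aᵀ + B * Vᵀ + V * Bᵀ := by
  have hKW : Vᵀ * W⁻¹ * W = Vᵀ := by rw [Matrix.mul_assoc, nonsing_inv_mul _ hdet, Matrix.mul_one]
  have hWK : W * (Vᵀ * W⁻¹)ᵀ = V := by
    rw [transpose_mul, transpose_nonsing_inv, hW, transpose_transpose, ← Matrix.mul_assoc,
      mul_nonsing_inv _ hdet, Matrix.one_mul]
  rw [transpose_add, transpose_mul, add_mul, mul_add, Matrix.mul_assoc, hKW, ← Matrix.mul_assoc,
    hWK]
  abel

end Matrix

theorem group_sparse_LQ_parameterization_stabilizes_general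
    (n m l M : ℕ)
    (A : Fin M → Matrix (Fin n) (Fin n) ℝ)
    (B2 : Fin M → Matrix (Fin n) (Fin m) ℝ)
    (B1 : Matrix (Fin n) (Fin l) ℝ)
    (hB1 : (B1 * B1ᵀ).PosDef)
    (W1 : Matrix (Fin n) (Fin n) ℝ) (W2 : Matrix (Fin n) (Fin m) ℝ)
    (hW1 : W1.PosDef)
    (hTheta : ∀ i, (-(A i * W1 + W1 * (A i)ᵀ + B2 i * W2ᵀ + W2 * (B2 i)ᵀ
        + B1 * B1ᵀ)).PosSemidef) :
    ∀ i, ∀ μ : ℂ,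
      μ ∈ spectrum ℂ ((A i + B2 i * (W2ᵀ * W1⁻¹)).map (Complex.ofReal)) → μ.re < 0 := by
  intro i μ hμ
  have hW1T : W1ᵀ = W1 := by simpa using hW1.isHermitian.eq
  have hLyap : (-((A i + B2 i * (W2ᵀ * W1⁻¹)) * W1
      + W1 * (A i + B2 i * (W2ᵀ * W1⁻¹))ᵀ)).PosDef := by
    rw [closedLoop_mul_add_mul_transpose _ _ _ _ hW1T hW1.det_pos.ne'.isUnit]
    convert hB1.add_posSemidef (hTheta i) using 1
    abel
  rw [← Complex.coe_algebraMap] at hμ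
  exact re_neg_of_mem_spectrum_map_of_lyapunov hW1 hLyap hμ

/-- **Theorem 2.4, part 1** (Ma et al. 2021): any `W` in the convex parameterization set `𝒞`
(with `W₁ ≻ 0`) yields a feedback gain `K = W₂ᵀ W₁⁻¹` that internally stabilizes every
extreme system, i.e. every eigenvalue of `A_i + B_{2,i} K` has strictly negative real part. -/
theorem group_sparse_LQ_parameterization_stabilizes
    (n m l M : ℕ) (hn : 0 < n) (hm : 0 < m) (hl : 0 < l) (hM : 0 < M)
    (A : Fin M → Matrix (Fin n) (Fin n) ℝ)
    (B2 : Fin M → Matrix (Fin n) (Fin m) ℝ)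
    (B1 : Matrix (Fin n) (Fin l) ℝ)
    (hB1 : (B1 * B1ᵀ).PosDef)
    (W1 : Matrix (Fin n) (Fin n) ℝ) (W2 : Matrix (Fin n) (Fin m) ℝ)
    (W3 : Matrix (Fin m) (Fin m) ℝ)
    (hW : (Matrix.fromBlocks W1 W2 W2ᵀ W3).PosSemidef)
    (hW1 : W1.PosDef)
    (hTheta : ∀ i, (-(A i * W1 + W1 * (A i)ᵀ + B2 i * W2ᵀ + W2 * (B2 i)ᵀ
        + B1 * B1ᵀ)).PosSemidef) :
    ∀ i, ∀ μ : ℂ,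
      μ ∈ spectrum ℂ ((A i + B2 i * (W2ᵀ * W1⁻¹)).map (Complex.ofReal)) → μ.re < 0 :=
  group_sparse_LQ_parameterization_stabilizes_general n m l M A B2 B1 hB1 W1 W2 hW1 hTheta
end

section
/- Let n, m, l, q, M be positive integers and p = m + n. For each i = 1,…,M let A_i ∈ ℝ^{n×n} and B_{2,i} ∈ ℝ^{n×m}; let B₁ ∈ ℝ^{n×l} with B₁B₁ᵀ positive definite, and let C ∈ ℝ^{q×n}, D ∈ ℝ^{q×m} satisfy CᵀD = 0, CᵀC ≻ 0, DᵀD ≻ 0. Set R = blockdiag(CᵀC, DᵀD) ∈ 𝕊^p. Suppose W ∈ 𝕊^p is positive semidefinite with blocks W = [[W₁, W₂],[W₂ᵀ, W₃]], W₁ ≻ 0, and for every i the matrix A_iW₁ + W₁A_iᵀ + B_{2,i}W₂ᵀ + W₂B_{2,i}ᵀ + B₁B₁ᵀ is negative semidefinite. Let K = W₂ᵀW₁⁻¹ and, for each i, let W_{c,i} ∈ 𝕊^n be a symmetric solution of the closed-loop Lyapunov equation (A_i + B_{2,i}K)W_{c,i} + W_{c,i}(A_i + B_{2,i}K)ᵀ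 + B₁B₁ᵀ = 0 (the controllability Gramian of the i-th extreme closed-loop system; it is unique and positive semidefinite since the closed loop is Hurwitz). Then for every i = 1,…,M, Tr(RW) ≥ Tr((CᵀC + KᵀDᵀDK)·W_{c,i}); that is, the convex objective ⟨R, W⟩ is an upper bound on the squared H₂-norm ‖H_i(s)‖²_{H₂} of each extreme closed-loop system. -/
/-!
Write `A_cl = A_i + B_{2,i} K`. Because `K W₁ = W₂ᵀ`, the constraint on `W` reads
`A_cl W₁ + W₁ A_clᵀ + B₁B₁ᵀ ⪯ 0`, so `W₁ ≻ 0` is a Lyapunov certificate for `A_cl`, and subtracting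
the Lyapunov equation of `W_{c,i}` shows that `Δ = W₁ - W_{c,i}` satisfies `A_cl Δ + Δ A_clᵀ ⪯ 0`.
A congruence turning the certificate into the identity makes `A_cl + A_clᵀ ≺ 0`; then for an
eigenvector `v` of `Δ` with eigenvalue `μ`, `vᵀ(A_cl Δ + Δ A_clᵀ)v = μ vᵀ(A_cl + A_clᵀ)v` forces
`μ ≥ 0`, so `W_{c,i} ⪯ W₁`. Hence the cost of `W_{c,i}` is at most
`Tr((CᵀC + KᵀDᵀDK) W₁) = Tr(CᵀC W₁) + Tr(DᵀD · W₂ᵀW₁⁻¹W₂)`, and the Schur complement of `W ⪰ 0`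
gives `W₂ᵀW₁⁻¹W₂ ⪯ W₃`, which bounds this by `Tr(RW)`.
-/

open Matrix

namespace Matrix

variable {ι κ : Type*} [Fintype ι] [Fintype κ]

theorem PosSemidef.trace_mul_nonneg {A B : Matrix ι ι ℝ} (hA : A.PosSemidef)
    (hB : B.PosSemidef) : 0 ≤ (A * B).trace := by
  classical
  open scoped MatrixOrder in
  obtain ⟨C, rfl⟩ := CStarAlgebra.nonneg_iff_eq_star_mul_self.mp hB.nonneg
  rw [star_eq_conjTranspose, ← Matrix.mul_assoc, trace_mul_comm, ← Matrix.mul_assoc]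
  exact (hA.mul_mul_conjTranspose_same C).trace_nonneg

theorem trace_mul_le_trace_mul_of_posSemidef_sub {A B C : Matrix ι ι ℝ} (hA : A.PosSemidef)
    (hBC : (C - B).PosSemidef) : (A * B).trace ≤ (A * C).trace := by
  have := hA.trace_mul_nonneg hBC
  rwa [Matrix.mul_sub, trace_sub, sub_nonneg] at this

theorem trace_fromBlocks {R : Type*} [AddCommMonoid R] (A : Matrix ι ι R) (B : Matrix ι κ R)
    (C : Matrix κ ι R) (D : Matrix κ κ R) :
    (fromBlocks A B C D).trace = A.trace + D.trace := by
  simp [trace, Fintype.sum_sum_type]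

theorem closedLoop_lyapunov_eq {A W₁ : Matrix ι ι ℝ} {B : Matrix ι κ ℝ} {K : Matrix κ ι ℝ}
    {W₂ : Matrix ι κ ℝ} (hW₁ : W₁.IsSymm) (hK : K * W₁ = W₂ᵀ) :
    (A + B * K) * W₁ + W₁ * (A + B * K)ᵀ = A * W₁ + W₁ * Aᵀ + B * W₂ᵀ + W₂ * Bᵀ := by
  have hW₂ : W₁ * Kᵀ = W₂ := by
    rw [← hW₁.eq, ← transpose_mul, hK, transpose_transpose]
  rw [transpose_add, transpose_mul, Matrix.add_mul, Matrix.mul_add, Matrix.mul_assoc, hK,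
    ← Matrix.mul_assoc W₁, hW₂]
  abel

variable [DecidableEq ι]

theorem posSemidef_of_lyapunov_of_dissipative {A Δ : Matrix ι ι ℝ} (hA : (-(A + Aᵀ)).PosDef)
    (hΔ : Δ.IsSymm) (hAΔ : (-(A * Δ + Δ * Aᵀ)).PosSemidef) : Δ.PosSemidef := by
  have hΔ' : Δ.IsHermitian := isHermitian_iff_isSymm.mpr hΔ
  rw [hΔ'.posSemidef_iff_eigenvalues_nonneg]
  intro i
  set v : ι → ℝ := ⇑(hΔ'.eigenvectorBasis i)
  set μ := hΔ'.eigenvalues i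
  have hv : v ≠ 0 := by
    simpa [v] using hΔ'.eigenvectorBasis.orthonormal.ne_zero i
  have hΔv : Δ *ᵥ v = μ • v := hΔ'.mulVec_eigenvectorBasis i
  have hvΔ : ∀ w, v ⬝ᵥ Δ *ᵥ w = μ * (v ⬝ᵥ w) := fun w => by
    rw [dotProduct_mulVec, ← mulVec_transpose, hΔ.eq, hΔv, smul_dotProduct, smul_eq_mul]
  have hquad : v ⬝ᵥ (A * Δ + Δ * Aᵀ) *ᵥ v = μ * (v ⬝ᵥ (A + Aᵀ) *ᵥ v) := by
    simp only [add_mulVec, ← mulVec_mulVec, hΔv, mulVec_smul, dotProduct_add, dotProduct_smul,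
      smul_eq_mul, hvΔ, mul_add]
  have hAv := hA.dotProduct_mulVec_pos hv
  have hAΔv := hAΔ.dotProduct_mulVec_nonneg v
  simp only [star_trivial, neg_mulVec, dotProduct_neg, hquad] at hAv hAΔv
  show 0 ≤ μ
  nlinarith

theorem PosDef.exists_isUnit_eq_mul_transpose {P : Matrix ι ι ℝ} (hP : P.PosDef) :
    ∃ T : Matrix ι ι ℝ, IsUnit T ∧ P = T * Tᵀ := by
  open scoped MatrixOrder in
  obtain ⟨B, hB⟩ := CStarAlgebra.nonneg_iff_eq_star_mul_self.mp hP.posSemidef.nonneg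
  rw [star_eq_conjTranspose, conjTranspose_eq_transpose_of_trivial] at hB
  exact ⟨Bᵀ, isUnit_of_mul_isUnit_left (hB ▸ hP.isUnit), by rwa [transpose_transpose]⟩

theorem mul_lyapunov_mul_transpose {S : Matrix ι ι ℝ} (hS : IsUnit S) (A X : Matrix ι ι ℝ) :
    S * (A * X + X * Aᵀ) * Sᵀ
      = (S * A * S⁻¹) * (S * X * Sᵀ) + (S * X * Sᵀ) * (S * A * S⁻¹)ᵀ := by
  have hdet := (isUnit_iff_isUnit_det S).mp hS
  have hdetT : IsUnit Sᵀ.det := by rwa [det_transpose]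
  simp only [transpose_mul, transpose_nonsing_inv, Matrix.mul_assoc,
    nonsing_inv_mul_cancel_left S _ hdet, mul_nonsing_inv_cancel_left Sᵀ _ hdetT, Matrix.mul_add,
    Matrix.add_mul]

theorem posSemidef_of_lyapunov {A P Δ : Matrix ι ι ℝ} (hP : P.PosDef)
    (hAP : (-(A * P + P * Aᵀ)).PosDef) (hΔ : Δ.IsSymm)
    (hAΔ : (-(A * Δ + Δ * Aᵀ)).PosSemidef) : Δ.PosSemidef := by
  obtain ⟨T, hT, rfl⟩ := hP.exists_isUnit_eq_mul_transpose
  set S := T⁻¹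
  have hS : IsUnit S := isUnit_nonsing_inv_iff.mpr hT
  have hstar : star S = Sᵀ := by rw [star_eq_conjTranspose, conjTranspose_eq_transpose_of_trivial]
  have hSP : S * (T * Tᵀ) * Sᵀ = 1 := by
    have hdet := (isUnit_iff_isUnit_det T).mp hT
    rw [Matrix.mul_assoc, Matrix.mul_assoc, ← transpose_mul, nonsing_inv_mul T hdet,
      transpose_one, Matrix.mul_one, nonsing_inv_mul T hdet]
  have hconj := mul_lyapunov_mul_transpose hS A
  rw [← hS.posSemidef_star_right_conjugate_iff, hstar]
  refine posSemidef_of_lyapunov_of_dissipative (A := S * A * S⁻¹) ?_ ?_ ?_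
  · have := hS.posDef_star_right_conjugate_iff.mpr hAP
    rwa [hstar, Matrix.mul_neg, Matrix.neg_mul, hconj, hSP, Matrix.mul_one, Matrix.one_mul] at this
  · simp only [IsSymm, transpose_mul, transpose_transpose, hΔ.eq, Matrix.mul_assoc]
  · rw [← hconj, ← Matrix.neg_mul, ← Matrix.mul_neg, ← hstar]
    exact hS.posSemidef_star_right_conjugate_iff.mpr hAΔ

theorem trace_mul_le_trace_fromBlocks_mul (R₁ : Matrix ι ι ℝ) {R₂ : Matrix κ κ ℝ}
    (hR₂ : R₂.PosSemidef) {W₁ : Matrix ι ι ℝ} {W₂ : Matrix ι κ ℝ} {W₃ : Matrix κ κ ℝ}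
    (hW₁ : W₁.PosDef) (hW : (fromBlocks W₁ W₂ W₂ᵀ W₃).PosSemidef) :
    ((R₁ + (W₂ᵀ * W₁⁻¹)ᵀ * R₂ * (W₂ᵀ * W₁⁻¹)) * W₁).trace
      ≤ (fromBlocks R₁ 0 0 R₂ * fromBlocks W₁ W₂ W₂ᵀ W₃).trace := by
  have hdet := (isUnit_iff_isUnit_det W₁).mp hW₁.isUnit
  have : Invertible W₁ := W₁.invertibleOfIsUnitDet hdet
  have hSchur : (W₃ - W₂ᵀ * W₁⁻¹ * W₂).PosSemidef :=
    (PosDef.fromBlocks₁₁ W₂ W₃ hW₁).mp (by simpa using hW)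
  have hW₁T : W₁ᵀ = W₁ := by simpa using hW₁.isHermitian.eq
  set K := W₂ᵀ * W₁⁻¹
  have hKW₁K : K * W₁ * Kᵀ = W₂ᵀ * W₁⁻¹ * W₂ := by
    rw [nonsing_inv_mul_cancel_right _ _ hdet, transpose_mul, transpose_nonsing_inv, hW₁T,
      transpose_transpose, Matrix.mul_assoc]
  have hgain : (Kᵀ * R₂ * K * W₁).trace ≤ (R₂ * W₃).trace := by
    calc (Kᵀ * R₂ * K * W₁).trace = (R₂ * (K * W₁ * Kᵀ)).trace := by
          rw [Matrix.mul_assoc, Matrix.mul_assoc, trace_mul_comm, Matrix.mul_assoc,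
            Matrix.mul_assoc]
      _ ≤ (R₂ * W₃).trace := hKW₁K ▸ trace_mul_le_trace_mul_of_posSemidef_sub hR₂ hSchur
  rw [fromBlocks_multiply, trace_fromBlocks, Matrix.add_mul, trace_add]
  simpa using hgain

end Matrix

theorem group_sparse_LQ_parameterization_H2_bound_general
    (n m l q M : ℕ)
    (A : Fin M → Matrix (Fin n) (Fin n) ℝ)
    (B2 : Fin M → Matrix (Fin n) (Fin m) ℝ)
    (B1 : Matrix (Fin n) (Fin l) ℝ)
    (hB1 : (B1 * B1ᵀ).PosDef)
    (C : Matrix (Fin q) (Fin n) ℝ) (D : Matrix (Fin q) (Fin m) ℝ)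
    (W1 : Matrix (Fin n) (Fin n) ℝ) (W2 : Matrix (Fin n) (Fin m) ℝ)
    (W3 : Matrix (Fin m) (Fin m) ℝ)
    (hW : (Matrix.fromBlocks W1 W2 W2ᵀ W3).PosSemidef)
    (hW1 : W1.PosDef)
    (hTheta : ∀ i, (-(A i * W1 + W1 * (A i)ᵀ + B2 i * W2ᵀ + W2 * (B2 i)ᵀ
        + B1 * B1ᵀ)).PosSemidef)
    (K : Matrix (Fin m) (Fin n) ℝ) (hK : K = W2ᵀ * W1⁻¹)
    (Wc : Fin M → Matrix (Fin n) (Fin n) ℝ)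
    (hWcSymm : ∀ i, (Wc i).IsSymm)
    (hLyap : ∀ i, (A i + B2 i * K) * Wc i + Wc i * (A i + B2 i * K)ᵀ + B1 * B1ᵀ = 0) :
    ∀ i, ((Cᵀ * C + Kᵀ * (Dᵀ * D) * K) * Wc i).trace
      ≤ ((Matrix.fromBlocks (Cᵀ * C) 0 0 (Dᵀ * D))
          * (Matrix.fromBlocks W1 W2 W2ᵀ W3)).trace := by
  intro i
  set Acl := A i + B2 i * K
  have hW1symm : W1.IsSymm := by simpa using hW1.isHermitian
  have hKW1 : K * W1 = W2ᵀ := by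
    rw [hK, nonsing_inv_mul_cancel_right _ _ ((isUnit_iff_isUnit_det W1).mp hW1.isUnit)]
  have hcl : (-(Acl * W1 + W1 * Aclᵀ + B1 * B1ᵀ)).PosSemidef := by
    rw [closedLoop_lyapunov_eq hW1symm hKW1]
    exact hTheta i
  have hgap : Acl * (W1 - Wc i) + (W1 - Wc i) * Aclᵀ = Acl * W1 + W1 * Aclᵀ + B1 * B1ᵀ := by
    rw [Matrix.mul_sub, Matrix.sub_mul, ← sub_zero (Acl * W1 + W1 * Aclᵀ + B1 * B1ᵀ), ← hLyap i]
    abel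
  have hWc_le : (W1 - Wc i).PosSemidef := by
    refine posSemidef_of_lyapunov hW1 ?_ (hW1symm.sub (hWcSymm i)) (hgap ▸ hcl)
    simpa using PosDef.posSemidef_add hcl hB1
  have hDD : (Dᵀ * D).PosSemidef := by simpa using posSemidef_conjTranspose_mul_self D
  have hcost : (Cᵀ * C + Kᵀ * (Dᵀ * D) * K).PosSemidef := by
    simpa using (posSemidef_conjTranspose_mul_self C).add (hDD.conjTranspose_mul_mul_same K)
  calc _ ≤ ((Cᵀ * C + Kᵀ * (Dᵀ * D) * K) * W1).trace :=
        trace_mul_le_trace_mul_of_posSemidef_sub hcost hWc_le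
    _ ≤ _ := hK ▸ trace_mul_le_trace_fromBlocks_mul _ hDD hW1 hW

/-- **Theorem 2.4, part 2** (Ma et al. 2021): for any `W` in the convex parameterization set
`𝒞` (with `W₁ ≻ 0`), the objective `⟨R, W⟩ = Tr(RW)` upper bounds the squared `H₂`-norm
`Tr((CᵀC + KᵀDᵀDK) W_{c,i})` of each extreme closed-loop system, where `K = W₂ᵀW₁⁻¹` and
`W_{c,i}` is the (symmetric) controllability Gramian solving the closed-loop Lyapunov
equation. -/
theorem group_sparse_LQ_parameterization_H2_bound
    (n m l q M : ℕ) (hn : 0 < n) (hm : 0 < m) (hl : 0 < l) (hq : 0 < q) (hM : 0 < M)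
    (A : Fin M → Matrix (Fin n) (Fin n) ℝ)
    (B2 : Fin M → Matrix (Fin n) (Fin m) ℝ)
    (B1 : Matrix (Fin n) (Fin l) ℝ)
    (hB1 : (B1 * B1ᵀ).PosDef)
    (C : Matrix (Fin q) (Fin n) ℝ) (D : Matrix (Fin q) (Fin m) ℝ)
    (hCD : Cᵀ * D = 0) (hC : (Cᵀ * C).PosDef) (hD : (Dᵀ * D).PosDef)
    (W1 : Matrix (Fin n) (Fin n) ℝ) (W2 : Matrix (Fin n) (Fin m) ℝ)
    (W3 : Matrix (Fin m) (Fin m) ℝ)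
    (hW : (Matrix.fromBlocks W1 W2 W2ᵀ W3).PosSemidef)
    (hW1 : W1.PosDef)
    (hTheta : ∀ i, (-(A i * W1 + W1 * (A i)ᵀ + B2 i * W2ᵀ + W2 * (B2 i)ᵀ
        + B1 * B1ᵀ)).PosSemidef)
    (K : Matrix (Fin m) (Fin n) ℝ) (hK : K = W2ᵀ * W1⁻¹)
    (Wc : Fin M → Matrix (Fin n) (Fin n) ℝ)
    (hWcSymm : ∀ i, (Wc i).IsSymm)
    (hLyap : ∀ i, (A i + B2 i * K) * Wc i + Wc i * (A i + B2 i * K)ᵀ + B1 * B1ᵀ = 0) :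
    ∀ i, ((Cᵀ * C + Kᵀ * (Dᵀ * D) * K) * Wc i).trace
      ≤ ((Matrix.fromBlocks (Cᵀ * C) 0 0 (Dᵀ * D))
          * (Matrix.fromBlocks W1 W2 W2ᵀ W3)).trace :=
  group_sparse_LQ_parameterization_H2_bound_general n m l q M A B2 B1 hB1 C D W1 W2 W3 hW hW1 hTheta
    K hK Wc hWcSymm hLyap
end

section
/- In the PALM setting, if 2τ ≥ β, then for every n ≥ 1 the iterates satisfy the sufficient-decrease inequality Ψ_{n+1} + C₂‖W̃_{n+1} − W̃_n‖² + C₃‖P̃_{n+1} − P̃_n‖² + C₄‖u_{n+1} − u_n‖² ≤ Ψ_n (an inequality in ℝ ∪ {+∞}). -/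
open Matrix

noncomputable section

/-! ## The PALM setting for the group-sparse feedback LQ problem

Row groups of the feedback gain are indexed by `Fin s` with sizes `mi i` (so `m = ∑ mi i`),
column groups by `Fin t` with sizes `nj j` (so `n = ∑ nj j`).  We realize the index set
`{1,…,m}` as the sigma type `Jm = Σ i, Fin (mi i)` and similarly `Jn`, and the index set of
size `p = n + m` as `Jp = Jn ⊕ Jm` (states first, then inputs).  Vectors in `ℝ^{p²}` are
functions `Jp × Jp → ℝ` (the vectorization of a `p × p` matrix), and vectors in `ℝ^{mn}`
are functions `Jm × Jn → ℝ`. -/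

/-- Row index set `{1,…,m}` partitioned into `s` groups. -/
abbrev Jm (s : ℕ) (mi : Fin s → ℕ) : Type := (i : Fin s) × Fin (mi i)

/-- Column index set `{1,…,n}` partitioned into `t` groups. -/
abbrev Jn (t : ℕ) (nj : Fin t → ℕ) : Type := (j : Fin t) × Fin (nj j)

/-- Index set of size `p = n + m`. -/
abbrev Jp (s t : ℕ) (mi : Fin s → ℕ) (nj : Fin t → ℕ) : Type := Jn t nj ⊕ Jm s mi

/-- Row index set of the constraint matrices `𝒜` and `ℬ` (size `N* + mn`). -/
abbrev JA (s t Nstar : ℕ) (mi : Fin s → ℕ) (nj : Fin t → ℕ) : Type :=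
  Fin Nstar ⊕ (Jm s mi × Jn t nj)

/-- The constraint matrix `ℬ = [0; −I_{mn}]`. -/
def Bmat (s t Nstar : ℕ) (mi : Fin s → ℕ) (nj : Fin t → ℕ) :
    Matrix (JA s t Nstar mi nj) (Jm s mi × Jn t nj) ℝ :=
  Matrix.fromRows 0 (-1)

/-- `vec⁻¹`: reinterpret a vector in `ℝ^{p²}` as a `p × p` matrix. -/
def toMat (s t : ℕ) (mi : Fin s → ℕ) (nj : Fin t → ℕ)
    (x : Jp s t mi nj × Jp s t mi nj → ℝ) : Matrix (Jp s t mi nj) (Jp s t mi nj) ℝ :=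
  Matrix.of fun i j => x (i, j)

/-- The cost matrix `R = blockdiag(CᵀC, DᵀD)`. -/
def Rmat (s t qd : ℕ) (mi : Fin s → ℕ) (nj : Fin t → ℕ)
    (Csys : Matrix (Fin qd) (Jn t nj) ℝ) (Dsys : Matrix (Fin qd) (Jm s mi) ℝ) :
    Matrix (Jp s t mi nj) (Jp s t mi nj) ℝ :=
  Matrix.fromBlocks (Csysᵀ * Csys) 0 0 (Dsysᵀ * Dsys)

/-- The linear part `⟨vec R, ·⟩` of the function `f`. -/
def flin (s t qd : ℕ) (mi : Fin s → ℕ) (nj : Fin t → ℕ)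
    (Csys : Matrix (Fin qd) (Jn t nj) ℝ) (Dsys : Matrix (Fin qd) (Jm s mi) ℝ)
    (x : Jp s t mi nj × Jp s t mi nj → ℝ) : ℝ :=
  (fun ij : Jp s t mi nj × Jp s t mi nj => Rmat s t qd mi nj Csys Dsys ij.1 ij.2) ⬝ᵥ x

/-- The affine matrix map `Ψ_i(W) = −V₂(F_iW + WF_iᵀ + Q)V₂ᵀ`
`= −(A_iW₁₁ + W₁₁A_iᵀ + B_{2,i}W₂₁ + W₁₂B_{2,i}ᵀ + B₁B₁ᵀ)`. -/
def PsiMat (s t M l : ℕ) (mi : Fin s → ℕ) (nj : Fin t → ℕ)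
    (Asys : Fin M → Matrix (Jn t nj) (Jn t nj) ℝ)
    (B2sys : Fin M → Matrix (Jn t nj) (Jm s mi) ℝ)
    (B1sys : Matrix (Jn t nj) (Fin l) ℝ)
    (i : Fin M) (Wm : Matrix (Jp s t mi nj) (Jp s t mi nj) ℝ) :
    Matrix (Jn t nj) (Jn t nj) ℝ :=
  -(Asys i * Wm.toBlocks₁₁ + Wm.toBlocks₁₁ * (Asys i)ᵀ + B2sys i * Wm.toBlocks₂₁
    + Wm.toBlocks₁₂ * (B2sys i)ᵀ + B1sys * B1sysᵀ)

/-- The effective domain of `f`: the set on which all the indicator terms of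
`f(W̃) = ⟨vec R, W̃⟩ + δ_{Γ₊^p}(W̃) + ∑ᵢ δ_{Γ₊^n}(vec Ψᵢ)` vanish. -/
def fdom (s t M l : ℕ) (mi : Fin s → ℕ) (nj : Fin t → ℕ)
    (Asys : Fin M → Matrix (Jn t nj) (Jn t nj) ℝ)
    (B2sys : Fin M → Matrix (Jn t nj) (Jm s mi) ℝ)
    (B1sys : Matrix (Jn t nj) (Fin l) ℝ) :
    Set (Jp s t mi nj × Jp s t mi nj → ℝ) :=
  {x | (toMat s t mi nj x).PosSemidef ∧
    ∀ i, (PsiMat s t M l mi nj Asys B2sys B1sys i (toMat s t mi nj x)).PosSemidef}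

/-- The group `ℓ₀`-penalty `g(P̃) = γ‖vec⁻¹(P̃)‖_{s,t;0}` (γ times the number of nonzero
blocks). -/
def gfun (s t : ℕ) (mi : Fin s → ℕ) (nj : Fin t → ℕ) (γ : ℝ)
    (P : Jm s mi × Jn t nj → ℝ) : ℝ :=
  γ * (Nat.card {ℓ : Fin s × Fin t |
    ∃ (a : Fin (mi ℓ.1)) (b : Fin (nj ℓ.2)), P (⟨ℓ.1, a⟩, ⟨ℓ.2, b⟩) ≠ 0} : ℝ)

/-- The quadratic penalty `H(W̃, P̃) = (ρ/2)‖𝒜W̃ + ℬP̃‖²`. -/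
def Hpen (s t Nstar : ℕ) (mi : Fin s → ℕ) (nj : Fin t → ℕ)
    (Amat : Matrix (JA s t Nstar mi nj) (Jp s t mi nj × Jp s t mi nj) ℝ) (ρ : ℝ)
    (Wt : Jp s t mi nj × Jp s t mi nj → ℝ) (Pt : Jm s mi × Jn t nj → ℝ) : ℝ :=
  (ρ/2) * ((Amat *ᵥ Wt + Bmat s t Nstar mi nj *ᵥ Pt)
    ⬝ᵥ (Amat *ᵥ Wt + Bmat s t Nstar mi nj *ᵥ Pt))

/-- The spectral norm of a real matrix. -/
def spectralNorm' {α β : Type*} [Fintype α] [Fintype β] [DecidableEq β]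
    (A : Matrix α β ℝ) : ℝ :=
  ‖LinearMap.toContinuousLinearMap (Matrix.toEuclideanLin A)‖

/-- Euclidean norm `‖v‖ = √(v ⬝ᵥ v)`. -/
def enorm' {ι : Type*} [Fintype ι] (v : ι → ℝ) : ℝ :=
  Real.sqrt (v ⬝ᵥ v)

/-- `κ₁ = ρ‖𝒜ᵀ𝒜‖`. -/
def kap1 (s t Nstar : ℕ) (mi : Fin s → ℕ) (nj : Fin t → ℕ)
    (Amat : Matrix (JA s t Nstar mi nj) (Jp s t mi nj × Jp s t mi nj) ℝ) (ρ : ℝ) : ℝ :=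
  ρ * spectralNorm' (Amatᵀ * Amat)

/-- `κ₂ = ρ‖ℬᵀℬ‖`. -/
def kap2 (s t Nstar : ℕ) (mi : Fin s → ℕ) (nj : Fin t → ℕ) (ρ : ℝ) : ℝ :=
  ρ * spectralNorm' ((Bmat s t Nstar mi nj)ᵀ * Bmat s t Nstar mi nj)

/-- `κ₃ = ρ‖𝒜ᵀℬ‖`. -/
def kap3 (s t Nstar : ℕ) (mi : Fin s → ℕ) (nj : Fin t → ℕ)
    (Amat : Matrix (JA s t Nstar mi nj) (Jp s t mi nj × Jp s t mi nj) ℝ) (ρ : ℝ) : ℝ :=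
  ρ * spectralNorm' (Amatᵀ * Bmat s t Nstar mi nj)

/-- The regularized augmented Lagrangian `Ψ`. -/
def PsiLag (s t Nstar qd : ℕ) (mi : Fin s → ℕ) (nj : Fin t → ℕ)
    (Csys : Matrix (Fin qd) (Jn t nj) ℝ) (Dsys : Matrix (Fin qd) (Jm s mi) ℝ)
    (Amat : Matrix (JA s t Nstar mi nj) (Jp s t mi nj × Jp s t mi nj) ℝ)
    (γ ρ β τ σ : ℝ)
    (Wt : Jp s t mi nj × Jp s t mi nj → ℝ) (Pt : Jm s mi × Jn t nj → ℝ)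
    (z u Wt' u' : Jp s t mi nj × Jp s t mi nj → ℝ) : ℝ :=
  flin s t qd mi nj Csys Dsys z + gfun s t mi nj γ Pt
    + Hpen s t Nstar mi nj Amat ρ Wt Pt
    + u ⬝ᵥ (Wt - z) + (β/2) * ((Wt - z) ⬝ᵥ (Wt - z))
    + (4*(1-σ)/(σ^2*β)) * (((u - u') + (σ*(τ-β)) • (Wt - Wt'))
        ⬝ᵥ ((u - u') + (σ*(τ-β)) • (Wt - Wt')))
    + (8*(σ*τ + kap1 s t Nstar mi nj Amat ρ)^2/(σ*β)) * ((Wt - Wt') ⬝ᵥ (Wt - Wt'))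

/-- The descent constant `C₂`. -/
def C2const (s t Nstar : ℕ) (mi : Fin s → ℕ) (nj : Fin t → ℕ)
    (Amat : Matrix (JA s t Nstar mi nj) (Jp s t mi nj × Jp s t mi nj) ℝ)
    (ρ β τ σ : ℝ) : ℝ :=
  τ - (kap1 s t Nstar mi nj Amat ρ + β)/2 - 4*σ*τ^2/β
    - 8*(σ*τ + kap1 s t Nstar mi nj Amat ρ)^2/(σ*β)

/-- The descent constant `C₃`. -/
def C3const (s t Nstar : ℕ) (mi : Fin s → ℕ) (nj : Fin t → ℕ)
    (Amat : Matrix (JA s t Nstar mi nj) (Jp s t mi nj × Jp s t mi nj) ℝ)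
    (ρ μ β σ : ℝ) : ℝ :=
  (μ - kap2 s t Nstar mi nj ρ)/2 - 8*(kap3 s t Nstar mi nj Amat ρ)^2/(σ*β)

/-- The descent constant `C₄`. -/
def C4const (β σ : ℝ) : ℝ := 1/(σ*β)

/-- The PALM iteration (31): the sequences `(W̃_n, P̃_n, z_n, u_n)` satisfy the four update
rules (the `P̃`- and `z`-updates being characterized as global minimizers of their
respective proximal subproblems). -/
def PALMIter (s t Nstar M l qd : ℕ) (mi : Fin s → ℕ) (nj : Fin t → ℕ)
    (Csys : Matrix (Fin qd) (Jn t nj) ℝ) (Dsys : Matrix (Fin qd) (Jm s mi) ℝ)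
    (Asys : Fin M → Matrix (Jn t nj) (Jn t nj) ℝ)
    (B2sys : Fin M → Matrix (Jn t nj) (Jm s mi) ℝ)
    (B1sys : Matrix (Jn t nj) (Fin l) ℝ)
    (Amat : Matrix (JA s t Nstar mi nj) (Jp s t mi nj × Jp s t mi nj) ℝ)
    (γ ρ μ β τ σ : ℝ)
    (Wseq : ℕ → Jp s t mi nj × Jp s t mi nj → ℝ)
    (Pseq : ℕ → Jm s mi × Jn t nj → ℝ)
    (zseq : ℕ → Jp s t mi nj × Jp s t mi nj → ℝ)
    (useq : ℕ → Jp s t mi nj × Jp s t mi nj → ℝ) : Prop :=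
  (∀ nn : ℕ,
    let v : Jm s mi × Jn t nj → ℝ :=
      Pseq nn - μ⁻¹ • (ρ • ((Bmat s t Nstar mi nj)ᵀ
        *ᵥ (Amat *ᵥ Wseq nn + Bmat s t Nstar mi nj *ᵥ Pseq nn)))
    ∀ Pv : Jm s mi × Jn t nj → ℝ,
      gfun s t mi nj γ (Pseq (nn+1))
          + (μ/2) * ((Pseq (nn+1) - v) ⬝ᵥ (Pseq (nn+1) - v))
        ≤ gfun s t mi nj γ Pv + (μ/2) * ((Pv - v) ⬝ᵥ (Pv - v))) ∧
  (∀ nn : ℕ,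
    let ξ : Jp s t mi nj × Jp s t mi nj → ℝ := Wseq nn + β⁻¹ • useq nn
    zseq (nn+1) ∈ fdom s t M l mi nj Asys B2sys B1sys ∧
      ∀ y ∈ fdom s t M l mi nj Asys B2sys B1sys,
        flin s t qd mi nj Csys Dsys (zseq (nn+1))
            + (β/2) * ((zseq (nn+1) - ξ) ⬝ᵥ (zseq (nn+1) - ξ))
          ≤ flin s t qd mi nj Csys Dsys y + (β/2) * ((y - ξ) ⬝ᵥ (y - ξ))) ∧
  (∀ nn : ℕ,
    Wseq (nn+1) = Wseq nn - τ⁻¹ •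
      (ρ • (Amatᵀ *ᵥ (Amat *ᵥ Wseq nn + Bmat s t Nstar mi nj *ᵥ Pseq (nn+1)))
        + useq nn + β • (Wseq nn - zseq (nn+1)))) ∧
  (∀ nn : ℕ, useq (nn+1) = useq nn + (σ*β) • (Wseq (nn+1) - zseq (nn+1)))

/-- The parameter selection criterion (30). -/
def Crit (s t Nstar : ℕ) (mi : Fin s → ℕ) (nj : Fin t → ℕ)
    (Amat : Matrix (JA s t Nstar mi nj) (Jp s t mi nj × Jp s t mi nj) ℝ)
    (ρ μ β τ σ : ℝ) : Prop :=
  0 < σ ∧ σ < 1/24 ∧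
  0 < 1 - 32*(kap1 s t Nstar mi nj Amat ρ)/β - 128*(kap1 s t Nstar mi nj Amat ρ)^2/β^2
      - 24*(kap1 s t Nstar mi nj Amat ρ)*σ/β - 24*σ ∧
  β > (4*(kap1 s t Nstar mi nj Amat ρ)/(1-24*σ))
      * (4 + 3*σ + Real.sqrt (24 - 168*σ + 9*σ^2)) ∧
  μ > kap2 s t Nstar mi nj ρ + 16*(kap3 s t Nstar mi nj Amat ρ)^2/(σ*β) ∧
  max (β/2) ((β/(24*σ)) * (1 - 16*(kap1 s t Nstar mi nj Amat ρ)/β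
      - Real.sqrt (1 - 32*(kap1 s t Nstar mi nj Amat ρ)/β
          - 128*(kap1 s t Nstar mi nj Amat ρ)^2/β^2
          - 24*(kap1 s t Nstar mi nj Amat ρ)*σ/β - 24*σ))) < τ ∧
  τ < (β/(24*σ)) * (1 - 16*(kap1 s t Nstar mi nj Amat ρ)/β
      + Real.sqrt (1 - 32*(kap1 s t Nstar mi nj Amat ρ)/β
          - 128*(kap1 s t Nstar mi nj Amat ρ)^2/β^2
          - 24*(kap1 s t Nstar mi nj Amat ρ)*σ/β - 24*σ))

/-! The PALM sweep decreases the augmented Lagrangian `L = f + g + H + ⟨u, W - z⟩ + β/2 ‖W - z‖²`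
block by block (the proximal `P`-step and the gradient `W`-step through the descent lemma for the
quadratic penalty `H`, the `z`-step by exact minimality), except that the dual ascent raises it by
`‖Δu‖²/(σβ)`. To pay for this, note that the residual `e = Δu + σ(τ - β)ΔW` is `-σ` times the
`W`-gradient `∇_W H + u` at the previous iterate, hence obeys `e⁺ = (1 - σ)e + r` with `‖r‖`
controlled by the previous `‖ΔW‖` and by `‖ΔP‖`. Convexity of `‖·‖²` makes `σ‖e‖²` contract, and
`‖Δu‖² ≤ 2‖e‖² + 2σ²τ²‖ΔW‖²` because `|τ - β| ≤ τ`. The regularization terms of `Ψ` are chosen so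
that a nonnegative combination of these three inequalities is exactly the claimed decrease. -/

section DotProduct

variable {n : Type*} [Fintype n]

lemma dotProduct_self_nonneg (x : n → ℝ) : 0 ≤ x ⬝ᵥ x := by
  simpa using dotProduct_self_star_nonneg x

lemma add_dotProduct_add_self (x y : n → ℝ) :
    (x + y) ⬝ᵥ (x + y) = x ⬝ᵥ x + 2 * (x ⬝ᵥ y) + y ⬝ᵥ y := by
  rw [dotProduct_add, add_dotProduct, add_dotProduct, dotProduct_comm y x]; ring

lemma sub_dotProduct_sub_self (x y : n → ℝ) :
    (x - y) ⬝ᵥ (x - y) = x ⬝ᵥ x - 2 * (x ⬝ᵥ y) + y ⬝ᵥ y := by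
  rw [dotProduct_sub, sub_dotProduct, sub_dotProduct, dotProduct_comm y x]; ring

lemma smul_dotProduct_smul_self (c : ℝ) (x : n → ℝ) : (c • x) ⬝ᵥ (c • x) = c ^ 2 * (x ⬝ᵥ x) := by
  rw [smul_dotProduct, dotProduct_smul, smul_eq_mul, smul_eq_mul]; ring

lemma sub_dotProduct_sub_self_le (x y : n → ℝ) :
    (x - y) ⬝ᵥ (x - y) ≤ 2 * (x ⬝ᵥ x) + 2 * (y ⬝ᵥ y) := by
  have := dotProduct_self_nonneg (x + y)
  rw [add_dotProduct_add_self] at this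
  rw [sub_dotProduct_sub_self]
  linarith

/-- Convexity of `‖·‖²` at `(1-σ)e + σ(r/σ)`, multiplied by `σ`: the gap is `(1-σ)‖σe - r‖²`. -/
lemma mul_dotProduct_self_smul_add_le {σ : ℝ} (hσ : σ ≤ 1) (e r : n → ℝ) :
    σ * (((1 - σ) • e + r) ⬝ᵥ ((1 - σ) • e + r)) ≤ σ * (1 - σ) * (e ⬝ᵥ e) + r ⬝ᵥ r := by
  have hgap := mul_nonneg (sub_nonneg.mpr hσ) (dotProduct_self_nonneg (σ • e - r))
  rw [sub_dotProduct_sub_self, smul_dotProduct_smul_self, smul_dotProduct, smul_eq_mul]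
    at hgap
  rw [add_dotProduct_add_self, smul_dotProduct_smul_self, smul_dotProduct, smul_eq_mul]
  nlinarith

lemma dotProduct_self_eq_norm_sq (x : n → ℝ) : x ⬝ᵥ x = ‖WithLp.toLp 2 x‖ ^ 2 := by
  rw [← real_inner_self_eq_norm_sq, EuclideanSpace.inner_toLp_toLp, star_trivial]

end DotProduct

section SpectralNorm

variable {m n : Type*} [Fintype m] [Fintype n] [DecidableEq n]

lemma spectralNorm'_nonneg (A : Matrix m n ℝ) : 0 ≤ spectralNorm' A := norm_nonneg _

lemma norm_toLp_mulVec_le (A : Matrix m n ℝ) (x : n → ℝ) :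
    ‖WithLp.toLp 2 (A *ᵥ x)‖ ≤ spectralNorm' A * ‖WithLp.toLp 2 x‖ := by
  simpa [spectralNorm'] using
    (LinearMap.toContinuousLinearMap (Matrix.toEuclideanLin A)).le_opNorm (WithLp.toLp 2 x)

lemma dotProduct_mulVec_self_le (M : Matrix n n ℝ) (x : n → ℝ) :
    x ⬝ᵥ (M *ᵥ x) ≤ spectralNorm' M * (x ⬝ᵥ x) := by
  calc x ⬝ᵥ (M *ᵥ x) = inner ℝ (WithLp.toLp 2 x) (WithLp.toLp 2 (M *ᵥ x)) := by
        rw [EuclideanSpace.inner_toLp_toLp, star_trivial, dotProduct_comm]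
    _ ≤ ‖WithLp.toLp 2 x‖ * ‖WithLp.toLp 2 (M *ᵥ x)‖ := real_inner_le_norm _ _
    _ ≤ ‖WithLp.toLp 2 x‖ * (spectralNorm' M * ‖WithLp.toLp 2 x‖) :=
        mul_le_mul_of_nonneg_left (norm_toLp_mulVec_le M x) (norm_nonneg _)
    _ = spectralNorm' M * (x ⬝ᵥ x) := by rw [dotProduct_self_eq_norm_sq]; ring

lemma mulVec_dotProduct_self_le_sq (A : Matrix m n ℝ) (x : n → ℝ) :
    (A *ᵥ x) ⬝ᵥ (A *ᵥ x) ≤ spectralNorm' A ^ 2 * (x ⬝ᵥ x) := by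
  rw [dotProduct_self_eq_norm_sq, dotProduct_self_eq_norm_sq, ← mul_pow]
  exact pow_le_pow_left₀ (norm_nonneg _) (norm_toLp_mulVec_le A x) 2

lemma mulVec_dotProduct_self_le_gram (A : Matrix m n ℝ) (x : n → ℝ) :
    (A *ᵥ x) ⬝ᵥ (A *ᵥ x) ≤ spectralNorm' (Aᵀ * A) * (x ⬝ᵥ x) := by
  rw [← dotProduct_transpose_mulVec, Matrix.mulVec_mulVec]
  exact dotProduct_mulVec_self_le _ x

lemma smul_sub_smul_mulVec_dotProduct_self_le {c ρ : ℝ} (hρ : 0 ≤ ρ) (M : Matrix n n ℝ)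
    (x : n → ℝ) :
    (c • x - ρ • (M *ᵥ x)) ⬝ᵥ (c • x - ρ • (M *ᵥ x))
      ≤ (|c| + ρ * spectralNorm' M) ^ 2 * (x ⬝ᵥ x) := by
  have hnorm : ‖WithLp.toLp 2 (c • x - ρ • (M *ᵥ x))‖
      ≤ (|c| + ρ * spectralNorm' M) * ‖WithLp.toLp 2 x‖ := by
    calc ‖WithLp.toLp 2 (c • x - ρ • (M *ᵥ x))‖
        ≤ ‖c • WithLp.toLp 2 x‖ + ‖ρ • WithLp.toLp 2 (M *ᵥ x)‖ := by
          rw [WithLp.toLp_sub, WithLp.toLp_smul, WithLp.toLp_smul]; exact norm_sub_le _ _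
      _ ≤ |c| * ‖WithLp.toLp 2 x‖ + ρ * (spectralNorm' M * ‖WithLp.toLp 2 x‖) := by
          rw [norm_smul, norm_smul, Real.norm_eq_abs, Real.norm_eq_abs, abs_of_nonneg hρ]
          gcongr
          exact norm_toLp_mulVec_le M x
      _ = (|c| + ρ * spectralNorm' M) * ‖WithLp.toLp 2 x‖ := by ring
  rw [dotProduct_self_eq_norm_sq, dotProduct_self_eq_norm_sq, ← mul_pow]
  exact pow_le_pow_left₀ (norm_nonneg _) hnorm 2

end SpectralNorm

lemma smul_sub_eq_of_eq_sub_inv_smul {K V : Type*} [Field K] [AddCommGroup V] [Module K V]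
    {τ : K} (hτ : τ ≠ 0) {w w' v : V} (h : w' = w - τ⁻¹ • v) : τ • (w - w') = v := by
  rw [h, sub_sub_cancel, smul_inv_smul₀ hτ]

lemma abs_sub_le_of_le_two_mul {β τ : ℝ} (hβ : 0 ≤ β) (h2τ : β ≤ 2 * τ) : |τ - β| ≤ τ :=
  abs_le.mpr ⟨by linarith, by linarith⟩

section ProximalSteps

variable {n : Type*} [Fintype n]

lemma prox_linearized_descent {μ L g g' h h' : ℝ} {x x' grad : n → ℝ} (hμ : μ ≠ 0)
    (hprox : g' + (μ/2) * ((x' - (x - μ⁻¹ • grad)) ⬝ᵥ (x' - (x - μ⁻¹ • grad)))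
      ≤ g + (μ/2) * ((x - (x - μ⁻¹ • grad)) ⬝ᵥ (x - (x - μ⁻¹ • grad))))
    (hdescent : h' ≤ h + (x' - x) ⬝ᵥ grad + (L/2) * ((x' - x) ⬝ᵥ (x' - x))) :
    g' + h' + ((μ - L)/2) * ((x' - x) ⬝ᵥ (x' - x)) ≤ g + h := by
  have hexpand : (μ/2) * ((x' - (x - μ⁻¹ • grad)) ⬝ᵥ (x' - (x - μ⁻¹ • grad)))
      = (μ/2) * ((x' - x) ⬝ᵥ (x' - x)) + (x' - x) ⬝ᵥ grad
        + (μ/2) * ((x - (x - μ⁻¹ • grad)) ⬝ᵥ (x - (x - μ⁻¹ • grad))) := by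
    rw [sub_sub_cancel, show x' - (x - μ⁻¹ • grad) = (x' - x) + μ⁻¹ • grad by abel,
      add_dotProduct_add_self, smul_dotProduct_smul_self, dotProduct_smul, smul_eq_mul]
    field_simp
  linarith

lemma mul_dotProduct_self_sub_add_inv_smul {β : ℝ} (hβ : β ≠ 0) (w z u : n → ℝ) :
    (β/2) * ((z - (w + β⁻¹ • u)) ⬝ᵥ (z - (w + β⁻¹ • u)))
      = u ⬝ᵥ (w - z) + (β/2) * ((w - z) ⬝ᵥ (w - z)) + (1/(2*β)) * (u ⬝ᵥ u) := by
  rw [show z - (w + β⁻¹ • u) = -((w - z) + β⁻¹ • u) by module, neg_dotProduct,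
    dotProduct_neg, neg_neg, add_dotProduct_add_self, smul_dotProduct_smul_self,
    dotProduct_smul, smul_eq_mul, dotProduct_comm (w - z) u]
  field_simp
  ring

lemma prox_step_descent {β f f' : ℝ} {w z z' u : n → ℝ} (hβ : β ≠ 0)
    (hprox : f' + (β/2) * ((z' - (w + β⁻¹ • u)) ⬝ᵥ (z' - (w + β⁻¹ • u)))
      ≤ f + (β/2) * ((z - (w + β⁻¹ • u)) ⬝ᵥ (z - (w + β⁻¹ • u)))) :
    f' + u ⬝ᵥ (w - z') + (β/2) * ((w - z') ⬝ᵥ (w - z'))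
      ≤ f + u ⬝ᵥ (w - z) + (β/2) * ((w - z) ⬝ᵥ (w - z)) := by
  rw [mul_dotProduct_self_sub_add_inv_smul hβ, mul_dotProduct_self_sub_add_inv_smul hβ]
    at hprox
  linarith

lemma gradient_step_descent {τ β L h h' : ℝ} {w w' z u grad : n → ℝ}
    (hstep : τ • (w - w') = grad + u + β • (w - z))
    (hdescent : h' ≤ h + (w' - w) ⬝ᵥ grad + (L/2) * ((w' - w) ⬝ᵥ (w' - w))) :
    h' + u ⬝ᵥ (w' - z) + (β/2) * ((w' - z) ⬝ᵥ (w' - z))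
        + (τ - (L + β)/2) * ((w' - w) ⬝ᵥ (w' - w))
      ≤ h + u ⬝ᵥ (w - z) + (β/2) * ((w - z) ⬝ᵥ (w - z)) := by
  have hstep' : (grad + u + β • (w - z)) ⬝ᵥ (w' - w) = -(τ * ((w' - w) ⬝ᵥ (w' - w))) := by
    rw [← hstep, show w - w' = -(w' - w) by abel, smul_neg, neg_dotProduct, smul_dotProduct,
      smul_eq_mul]
  rw [add_dotProduct, add_dotProduct, smul_dotProduct, smul_eq_mul, dotProduct_comm grad]
    at hstep'
  rw [show w' - z = (w - z) + (w' - w) by abel, dotProduct_add, add_dotProduct_add_self]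
  linarith

end ProximalSteps

section DualResidual

variable {ι : Type*}

def dualResidual (β τ σ : ℝ) (W u W' u' : ι → ℝ) : ι → ℝ :=
  (u - u') + (σ * (τ - β)) • (W - W')

variable {β τ σ : ℝ}

lemma dualResidual_eq (hτ : τ ≠ 0) {W W' z' u u' grad : ι → ℝ}
    (hW : W' = W - τ⁻¹ • (grad + u + β • (W - z'))) (hu : u' = u + (σ*β) • (W' - z')) :
    dualResidual β τ σ W' u' W u = (-σ) • (grad + u) := by
  have hstep := smul_sub_eq_of_eq_sub_inv_smul hτ hW
  rw [dualResidual, hu]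
  linear_combination (norm := module) (-σ) • hstep

lemma sub_dotProduct_sub_self_le_dualResidual [Fintype ι] (hβ : 0 ≤ β) (h2τ : β ≤ 2 * τ)
    (W u W' u' : ι → ℝ) :
    (u - u') ⬝ᵥ (u - u') ≤ 2 * (dualResidual β τ σ W u W' u' ⬝ᵥ dualResidual β τ σ W u W' u')
      + 2 * σ^2 * τ^2 * ((W - W') ⬝ᵥ (W - W')) := by
  have hsq : (σ * (τ - β))^2 ≤ σ^2 * τ^2 := by
    rw [mul_pow, ← sq_abs (τ - β)]
    gcongr
    exact abs_sub_le_of_le_two_mul hβ h2τ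
  have hle := sub_dotProduct_sub_self_le (dualResidual β τ σ W u W' u') ((σ * (τ - β)) • (W - W'))
  rw [smul_dotProduct_smul_self, dualResidual, add_sub_cancel_right, ← dualResidual] at hle
  linarith [mul_le_mul_of_nonneg_right hsq (dotProduct_self_nonneg (W - W'))]

end DualResidual

section AugmentedLagrangian

variable {ι π κ : Type*} [Fintype ι] [Fintype π] [Fintype κ]
  (A : Matrix κ ι ℝ) (B : Matrix κ π ℝ) (ρ : ℝ)

def quadPenalty (W : ι → ℝ) (P : π → ℝ) : ℝ :=
  (ρ/2) * ((A *ᵥ W + B *ᵥ P) ⬝ᵥ (A *ᵥ W + B *ᵥ P))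

lemma quadPenalty_comm (W : ι → ℝ) (P : π → ℝ) :
    quadPenalty A B ρ W P = quadPenalty B A ρ P W := by
  rw [quadPenalty, quadPenalty, add_comm (A *ᵥ W)]

variable {A B ρ}

lemma quadPenalty_le_add_right [DecidableEq π] (hρ : 0 ≤ ρ) (W : ι → ℝ) (P P' : π → ℝ) :
    quadPenalty A B ρ W P' ≤ quadPenalty A B ρ W P
      + (P' - P) ⬝ᵥ (ρ • (Bᵀ *ᵥ (A *ᵥ W + B *ᵥ P)))
      + (ρ * spectralNorm' (Bᵀ * B) / 2) * ((P' - P) ⬝ᵥ (P' - P)) := by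
  have hsplit : A *ᵥ W + B *ᵥ P' = (A *ᵥ W + B *ᵥ P) + B *ᵥ (P' - P) := by
    rw [Matrix.mulVec_sub]; abel
  have hgram := mul_le_mul_of_nonneg_left (mulVec_dotProduct_self_le_gram B (P' - P)) hρ
  rw [quadPenalty, quadPenalty, hsplit, add_dotProduct_add_self, dotProduct_smul, smul_eq_mul,
    dotProduct_transpose_mulVec]
  linarith

lemma quadPenalty_le_add_left [DecidableEq ι] (hρ : 0 ≤ ρ) (W W' : ι → ℝ) (P : π → ℝ) :
    quadPenalty A B ρ W' P ≤ quadPenalty A B ρ W P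
      + (W' - W) ⬝ᵥ (ρ • (Aᵀ *ᵥ (A *ᵥ W + B *ᵥ P)))
      + (ρ * spectralNorm' (Aᵀ * A) / 2) * ((W' - W) ⬝ᵥ (W' - W)) := by
  rw [quadPenalty_comm, quadPenalty_comm A, add_comm (A *ᵥ W)]
  exact quadPenalty_le_add_right hρ P W W'

variable (A B ρ)

/-- The augmented Lagrangian of `min f(z) + g(P) + H(W, P)` subject to `W = z`. -/
def augLag (f : (ι → ℝ) → ℝ) (g : (π → ℝ) → ℝ) (β : ℝ) (W : ι → ℝ) (P : π → ℝ)
    (z u : ι → ℝ) : ℝ :=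
  f z + g P + quadPenalty A B ρ W P + u ⬝ᵥ (W - z) + (β/2) * ((W - z) ⬝ᵥ (W - z))

variable {A B ρ}

lemma augLag_dual_update {f : (ι → ℝ) → ℝ} {g : (π → ℝ) → ℝ} {β σ : ℝ}
    {W : ι → ℝ} {P : π → ℝ} {z u u' : ι → ℝ} (hu : u' = u + (σ*β) • (W - z)) :
    augLag A B ρ f g β W P z u'
      = augLag A B ρ f g β W P z u + (1/(σ*β)) * ((u' - u) ⬝ᵥ (u' - u)) := by
  rw [show u' - u = (σ*β) • (W - z) by rw [hu]; abel, smul_dotProduct_smul_self, hu, augLag,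
    augLag, add_dotProduct, smul_dotProduct, smul_eq_mul]
  field_simp
  ring

theorem augLag_descent [DecidableEq ι] [DecidableEq π] {f : (ι → ℝ) → ℝ} {g : (π → ℝ) → ℝ}
    {μ β τ σ : ℝ} (hρ : 0 ≤ ρ) (hμ : μ ≠ 0) (hβ : β ≠ 0) (hτ : τ ≠ 0)
    {W W' z z' u u' : ι → ℝ} {P P' : π → ℝ}
    (hP : g P' + (μ/2) * ((P' - (P - μ⁻¹ • (ρ • (Bᵀ *ᵥ (A *ᵥ W + B *ᵥ P)))))
        ⬝ᵥ (P' - (P - μ⁻¹ • (ρ • (Bᵀ *ᵥ (A *ᵥ W + B *ᵥ P))))))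
      ≤ g P + (μ/2) * ((P - (P - μ⁻¹ • (ρ • (Bᵀ *ᵥ (A *ᵥ W + B *ᵥ P)))))
        ⬝ᵥ (P - (P - μ⁻¹ • (ρ • (Bᵀ *ᵥ (A *ᵥ W + B *ᵥ P)))))))
    (hz : f z' + (β/2) * ((z' - (W + β⁻¹ • u)) ⬝ᵥ (z' - (W + β⁻¹ • u)))
      ≤ f z + (β/2) * ((z - (W + β⁻¹ • u)) ⬝ᵥ (z - (W + β⁻¹ • u))))
    (hW : W' = W - τ⁻¹ • (ρ • (Aᵀ *ᵥ (A *ᵥ W + B *ᵥ P')) + u + β • (W - z')))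
    (hu : u' = u + (σ*β) • (W' - z')) :
    augLag A B ρ f g β W' P' z' u'
        + ((μ - ρ * spectralNorm' (Bᵀ * B))/2) * ((P' - P) ⬝ᵥ (P' - P))
        + (τ - (ρ * spectralNorm' (Aᵀ * A) + β)/2) * ((W' - W) ⬝ᵥ (W' - W))
      ≤ augLag A B ρ f g β W P z u + (1/(σ*β)) * ((u' - u) ⬝ᵥ (u' - u)) := by
  have hPstep := prox_linearized_descent hμ hP (quadPenalty_le_add_right hρ W P P')
  have hzstep := prox_step_descent hβ hz
  have hWstep := gradient_step_descent (smul_sub_eq_of_eq_sub_inv_smul hτ hW)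
    (quadPenalty_le_add_left hρ W W' P')
  rw [augLag_dual_update hu, augLag, augLag]
  linarith

end AugmentedLagrangian

section DualRecursion

variable {ι π κ : Type*} [Fintype ι] [Fintype π] [Fintype κ]
  {A : Matrix κ ι ℝ} {B : Matrix κ π ℝ} {ρ β τ σ : ℝ}

lemma dualResidual_succ (hτ : τ ≠ 0) {W₀ W W' z z' u₀ u u' : ι → ℝ} {P P' : π → ℝ}
    (hW : W = W₀ - τ⁻¹ • (ρ • (Aᵀ *ᵥ (A *ᵥ W₀ + B *ᵥ P)) + u₀ + β • (W₀ - z)))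
    (hW' : W' = W - τ⁻¹ • (ρ • (Aᵀ *ᵥ (A *ᵥ W + B *ᵥ P')) + u + β • (W - z')))
    (hu : u = u₀ + (σ*β) • (W - z)) (hu' : u' = u + (σ*β) • (W' - z')) :
    dualResidual β τ σ W' u' W u = (1 - σ) • dualResidual β τ σ W u W₀ u₀
      + ((σ^2 * (τ - β)) • (W - W₀) - (σ * ρ) • ((Aᵀ * A) *ᵥ (W - W₀))
        - (σ * ρ) • ((Aᵀ * B) *ᵥ (P' - P))) := by
  have he := dualResidual_eq hτ hW hu
  have hu_eq : u = u₀ + dualResidual β τ σ W u W₀ u₀ - (σ * (τ - β)) • (W - W₀) := by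
    rw [dualResidual]; abel
  have hgrad : ρ • (Aᵀ *ᵥ (A *ᵥ W + B *ᵥ P')) - ρ • (Aᵀ *ᵥ (A *ᵥ W₀ + B *ᵥ P))
      = ρ • ((Aᵀ * A) *ᵥ (W - W₀)) + ρ • ((Aᵀ * B) *ᵥ (P' - P)) := by
    simp only [← Matrix.mulVec_mulVec, Matrix.mulVec_sub, Matrix.mulVec_add]
    module
  rw [dualResidual_eq hτ hW' hu']
  linear_combination (norm := module) (-σ) • hgrad - σ • hu_eq - he

lemma residual_dotProduct_self_le [DecidableEq ι] [DecidableEq π] (hρ : 0 ≤ ρ) (hβ : 0 ≤ β)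
    (hσ : 0 ≤ σ) (h2τ : β ≤ 2 * τ) (M : Matrix ι ι ℝ) (N : Matrix ι π ℝ) (x : ι → ℝ) (y : π → ℝ) :
    ((σ^2 * (τ - β)) • x - (σ * ρ) • (M *ᵥ x) - (σ * ρ) • (N *ᵥ y))
        ⬝ᵥ ((σ^2 * (τ - β)) • x - (σ * ρ) • (M *ᵥ x) - (σ * ρ) • (N *ᵥ y))
      ≤ 2 * σ^2 * (σ * τ + ρ * spectralNorm' M)^2 * (x ⬝ᵥ x)
        + 2 * σ^2 * (ρ * spectralNorm' N)^2 * (y ⬝ᵥ y) := by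
  have hc : |σ * (τ - β)| ≤ σ * τ := by
    rw [abs_mul, abs_of_nonneg hσ]
    exact mul_le_mul_of_nonneg_left (abs_sub_le_of_le_two_mul hβ h2τ) hσ
  have hx := smul_sub_smul_mulVec_dotProduct_self_le (c := σ * (τ - β)) hρ M x
  have hcoef : (|σ * (τ - β)| + ρ * spectralNorm' M)^2 ≤ (σ * τ + ρ * spectralNorm' M)^2 := by
    have := mul_nonneg hρ (spectralNorm'_nonneg M)
    gcongr
  have hy := mul_le_mul_of_nonneg_left (mulVec_dotProduct_self_le_sq N y)
    (sq_nonneg (σ * ρ))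
  have hsplit : (σ^2 * (τ - β)) • x - (σ * ρ) • (M *ᵥ x)
      = σ • ((σ * (τ - β)) • x - ρ • (M *ᵥ x)) := by module
  calc _ ≤ 2 * (σ^2 * (((σ * (τ - β)) • x - ρ • (M *ᵥ x))
            ⬝ᵥ ((σ * (τ - β)) • x - ρ • (M *ᵥ x))))
          + 2 * ((σ * ρ)^2 * ((N *ᵥ y) ⬝ᵥ (N *ᵥ y))) := by
        rw [← smul_dotProduct_smul_self, ← smul_dotProduct_smul_self, ← hsplit]
        exact sub_dotProduct_sub_self_le _ _
    _ ≤ _ := by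
        have := mul_le_mul_of_nonneg_left
          (hx.trans (mul_le_mul_of_nonneg_right hcoef (dotProduct_self_nonneg x))) (sq_nonneg σ)
        linarith

lemma dualResidual_contraction [DecidableEq ι] [DecidableEq π] (hρ : 0 ≤ ρ) (hβ : 0 ≤ β)
    (hτ : τ ≠ 0) (hσ0 : 0 ≤ σ) (hσ1 : σ ≤ 1) (h2τ : β ≤ 2 * τ)
    {W₀ W W' z z' u₀ u u' : ι → ℝ} {P P' : π → ℝ}
    (hW : W = W₀ - τ⁻¹ • (ρ • (Aᵀ *ᵥ (A *ᵥ W₀ + B *ᵥ P)) + u₀ + β • (W₀ - z)))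
    (hW' : W' = W - τ⁻¹ • (ρ • (Aᵀ *ᵥ (A *ᵥ W + B *ᵥ P')) + u + β • (W - z')))
    (hu : u = u₀ + (σ*β) • (W - z)) (hu' : u' = u + (σ*β) • (W' - z')) :
    σ * (dualResidual β τ σ W' u' W u ⬝ᵥ dualResidual β τ σ W' u' W u)
      ≤ σ * (1 - σ) * (dualResidual β τ σ W u W₀ u₀ ⬝ᵥ dualResidual β τ σ W u W₀ u₀)
        + 2 * σ^2 * (σ * τ + ρ * spectralNorm' (Aᵀ * A))^2 * ((W - W₀) ⬝ᵥ (W - W₀))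
        + 2 * σ^2 * (ρ * spectralNorm' (Aᵀ * B))^2 * ((P' - P) ⬝ᵥ (P' - P)) := by
  rw [dualResidual_succ hτ hW hW' hu hu', add_assoc]
  exact (mul_dotProduct_self_smul_add_le hσ1 _ _).trans
    (add_le_add_right (residual_dotProduct_self_le hρ hβ hσ0 h2τ _ _ _ _) _)

end DualRecursion

section RegularizedLagrangian

variable {ι π κ : Type*} [Fintype ι] [Fintype π] [Fintype κ] [DecidableEq ι] [DecidableEq π]
  (A : Matrix κ ι ℝ) (B : Matrix κ π ℝ)

/-- The paper's `Ψ` for general `𝒜`, `ℬ`, `f`, `g`; `PsiLag` unfolds to it. -/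
def regAugLag (f : (ι → ℝ) → ℝ) (g : (π → ℝ) → ℝ) (ρ β τ σ : ℝ) (W : ι → ℝ) (P : π → ℝ)
    (z u W' u' : ι → ℝ) : ℝ :=
  augLag A B ρ f g β W P z u
    + (4*(1-σ)/(σ^2*β)) * (dualResidual β τ σ W u W' u' ⬝ᵥ dualResidual β τ σ W u W' u')
    + (8*(σ*τ + ρ * spectralNorm' (Aᵀ * A))^2/(σ*β)) * ((W - W') ⬝ᵥ (W - W'))

variable {A B}

theorem regAugLag_sufficient_decrease {f : (ι → ℝ) → ℝ} {g : (π → ℝ) → ℝ} {ρ μ β τ σ : ℝ}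
    (hρ : 0 ≤ ρ) (hμ : μ ≠ 0) (hβ : 0 < β) (hτ : τ ≠ 0) (hσ0 : 0 < σ) (hσ1 : σ ≤ 1)
    (h2τ : β ≤ 2 * τ) {W₀ W W' z z' u₀ u u' : ι → ℝ} {P P' : π → ℝ}
    (hP : g P' + (μ/2) * ((P' - (P - μ⁻¹ • (ρ • (Bᵀ *ᵥ (A *ᵥ W + B *ᵥ P)))))
        ⬝ᵥ (P' - (P - μ⁻¹ • (ρ • (Bᵀ *ᵥ (A *ᵥ W + B *ᵥ P))))))
      ≤ g P + (μ/2) * ((P - (P - μ⁻¹ • (ρ • (Bᵀ *ᵥ (A *ᵥ W + B *ᵥ P)))))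
        ⬝ᵥ (P - (P - μ⁻¹ • (ρ • (Bᵀ *ᵥ (A *ᵥ W + B *ᵥ P)))))))
    (hz : f z' + (β/2) * ((z' - (W + β⁻¹ • u)) ⬝ᵥ (z' - (W + β⁻¹ • u)))
      ≤ f z + (β/2) * ((z - (W + β⁻¹ • u)) ⬝ᵥ (z - (W + β⁻¹ • u))))
    (hW : W = W₀ - τ⁻¹ • (ρ • (Aᵀ *ᵥ (A *ᵥ W₀ + B *ᵥ P)) + u₀ + β • (W₀ - z)))
    (hW' : W' = W - τ⁻¹ • (ρ • (Aᵀ *ᵥ (A *ᵥ W + B *ᵥ P')) + u + β • (W - z')))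
    (hu : u = u₀ + (σ*β) • (W - z)) (hu' : u' = u + (σ*β) • (W' - z')) :
    regAugLag A B f g ρ β τ σ W' P' z' u' W u
        + (τ - (ρ * spectralNorm' (Aᵀ * A) + β)/2 - 4*σ*τ^2/β
            - 8*(σ*τ + ρ * spectralNorm' (Aᵀ * A))^2/(σ*β)) * ((W' - W) ⬝ᵥ (W' - W))
        + ((μ - ρ * spectralNorm' (Bᵀ * B))/2 - 8*(ρ * spectralNorm' (Aᵀ * B))^2/(σ*β))
            * ((P' - P) ⬝ᵥ (P' - P))
        + 1/(σ*β) * ((u' - u) ⬝ᵥ (u' - u))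
      ≤ regAugLag A B f g ρ β τ σ W P z u W₀ u₀ := by
  have hL := augLag_descent hρ hμ hβ.ne' hτ hP hz hW' hu'
  have hE := dualResidual_contraction hρ hβ.le hτ hσ0.le hσ1 h2τ hW hW' hu hu'
  have hU := sub_dotProduct_sub_self_le_dualResidual (σ := σ) hβ.le h2τ W' u' W u
  rw [regAugLag, regAugLag]
  -- `C₀ + 4/(σβ) = 4/(σ²β)`: the weights make every `‖e‖²`, `‖ΔW‖²`, `‖ΔP‖²` term cancel.
  linear_combination (norm := skip) hL + (4/(σ^3*β)) * hE + (2/(σ*β)) * hU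
  field_simp
  linarith

end RegularizedLagrangian

theorem PALM_sufficient_decrease_general
    (s t Nstar M l qd : ℕ)
    (mi : Fin s → ℕ) (nj : Fin t → ℕ)
    (Csys : Matrix (Fin qd) (Jn t nj) ℝ) (Dsys : Matrix (Fin qd) (Jm s mi) ℝ)
    (Asys : Fin M → Matrix (Jn t nj) (Jn t nj) ℝ)
    (B2sys : Fin M → Matrix (Jn t nj) (Jm s mi) ℝ)
    (B1sys : Matrix (Jn t nj) (Fin l) ℝ)
    (Amat : Matrix (JA s t Nstar mi nj) (Jp s t mi nj × Jp s t mi nj) ℝ)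
    (γ ρ μ β τ σ : ℝ)
    (hρ : 0 < ρ) (hμ : 0 < μ) (hβ : 0 < β) (hτ : 0 < τ)
    (hσ0 : 0 < σ) (hσ1 : σ ≤ 1)
    (Wseq : ℕ → Jp s t mi nj × Jp s t mi nj → ℝ)
    (Pseq : ℕ → Jm s mi × Jn t nj → ℝ)
    (zseq : ℕ → Jp s t mi nj × Jp s t mi nj → ℝ)
    (useq : ℕ → Jp s t mi nj × Jp s t mi nj → ℝ)
    (hiter : PALMIter s t Nstar M l qd mi nj Csys Dsys Asys B2sys B1sys Amat
      γ ρ μ β τ σ Wseq Pseq zseq useq)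
    (h2τ : β ≤ 2*τ) :
    ∀ nn : ℕ,
      PsiLag s t Nstar qd mi nj Csys Dsys Amat γ ρ β τ σ
          (Wseq (nn+2)) (Pseq (nn+2)) (zseq (nn+2)) (useq (nn+2))
          (Wseq (nn+1)) (useq (nn+1))
        + C2const s t Nstar mi nj Amat ρ β τ σ
            * ((Wseq (nn+2) - Wseq (nn+1)) ⬝ᵥ (Wseq (nn+2) - Wseq (nn+1)))
        + C3const s t Nstar mi nj Amat ρ μ β σ
            * ((Pseq (nn+2) - Pseq (nn+1)) ⬝ᵥ (Pseq (nn+2) - Pseq (nn+1)))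
        + C4const β σ * ((useq (nn+2) - useq (nn+1)) ⬝ᵥ (useq (nn+2) - useq (nn+1)))
      ≤ PsiLag s t Nstar qd mi nj Csys Dsys Amat γ ρ β τ σ
          (Wseq (nn+1)) (Pseq (nn+1)) (zseq (nn+1)) (useq (nn+1))
          (Wseq nn) (useq nn) := by
  intro nn
  obtain ⟨hP, hz, hW, hu⟩ := hiter
  exact regAugLag_sufficient_decrease hρ.le hμ.ne' hβ hτ.ne' hσ0 hσ1 h2τ
    (hP (nn + 1) (Pseq (nn + 1))) ((hz (nn + 1)).2 (zseq (nn + 1)) (hz nn).1)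
    (hW nn) (hW (nn + 1)) (hu nn) (hu (nn + 1))

/-- **Lemma 4.1 (sufficient decrease of the regularized augmented Lagrangian)**: if
`2τ ≥ β`, then for every `n ≥ 1` the PALM iterates satisfy
`Ψ_{n+1} + C₂‖W̃_{n+1}−W̃_n‖² + C₃‖P̃_{n+1}−P̃_n‖² + C₄‖u_{n+1}−u_n‖² ≤ Ψ_n`
(the case `n ≥ 1` being encoded by the index shift `n ↦ n+1`). -/
theorem PALM_sufficient_decrease
    (s t Nstar M l qd : ℕ)
    (hs : 0 < s) (ht : 0 < t) (hM : 0 < M)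
    (mi : Fin s → ℕ) (nj : Fin t → ℕ) (hmi : ∀ i, 0 < mi i) (hnj : ∀ j, 0 < nj j)
    (Csys : Matrix (Fin qd) (Jn t nj) ℝ) (Dsys : Matrix (Fin qd) (Jm s mi) ℝ)
    (Asys : Fin M → Matrix (Jn t nj) (Jn t nj) ℝ)
    (B2sys : Fin M → Matrix (Jn t nj) (Jm s mi) ℝ)
    (B1sys : Matrix (Jn t nj) (Fin l) ℝ)
    (Amat : Matrix (JA s t Nstar mi nj) (Jp s t mi nj × Jp s t mi nj) ℝ)
    (hAstruct : ∀ (x : Jp s t mi nj × Jp s t mi nj → ℝ) (a : Jm s mi) (b : Jn t nj),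
      (Amat *ᵥ x) (Sum.inr (a, b)) = x (Sum.inr a, Sum.inl b))
    (γ ρ μ β τ σ : ℝ)
    (hγ : 0 < γ) (hρ : 0 < ρ) (hμ : 0 < μ) (hβ : 0 < β) (hτ : 0 < τ)
    (hσ0 : 0 < σ) (hσ1 : σ ≤ 1)
    (Wseq : ℕ → Jp s t mi nj × Jp s t mi nj → ℝ)
    (Pseq : ℕ → Jm s mi × Jn t nj → ℝ)
    (zseq : ℕ → Jp s t mi nj × Jp s t mi nj → ℝ)
    (useq : ℕ → Jp s t mi nj × Jp s t mi nj → ℝ)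
    (hiter : PALMIter s t Nstar M l qd mi nj Csys Dsys Asys B2sys B1sys Amat
      γ ρ μ β τ σ Wseq Pseq zseq useq)
    (h2τ : β ≤ 2*τ) :
    ∀ nn : ℕ,
      PsiLag s t Nstar qd mi nj Csys Dsys Amat γ ρ β τ σ
          (Wseq (nn+2)) (Pseq (nn+2)) (zseq (nn+2)) (useq (nn+2))
          (Wseq (nn+1)) (useq (nn+1))
        + C2const s t Nstar mi nj Amat ρ β τ σ
            * ((Wseq (nn+2) - Wseq (nn+1)) ⬝ᵥ (Wseq (nn+2) - Wseq (nn+1)))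
        + C3const s t Nstar mi nj Amat ρ μ β σ
            * ((Pseq (nn+2) - Pseq (nn+1)) ⬝ᵥ (Pseq (nn+2) - Pseq (nn+1)))
        + C4const β σ * ((useq (nn+2) - useq (nn+1)) ⬝ᵥ (useq (nn+2) - useq (nn+1)))
      ≤ PsiLag s t Nstar qd mi nj Csys Dsys Amat γ ρ β τ σ
          (Wseq (nn+1)) (Pseq (nn+1)) (zseq (nn+1)) (useq (nn+1))
          (Wseq nn) (useq nn) :=
  PALM_sufficient_decrease_general s t Nstar M l qd mi nj Csys Dsys Asys B2sys B1sys Amat γ ρ μ β τ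
    σ hρ hμ hβ hτ hσ0 hσ1 Wseq Pseq zseq useq hiter h2τ
end
end

section
/- Let κ₁, κ₂, κ₃ ≥ 0 be real numbers and suppose the real parameters σ, β, μ, τ satisfy the parameter selection criterion (30): 0 < σ < 1/24; ς := 1 − 32κ₁/β − 128κ₁²/β² − 24κ₁σ/β − 24σ > 0; β > (4κ₁/(1−24σ))·(4 + 3σ + √(24 − 168σ + 9σ²)); μ > κ₂ + 16κ₃²/(σβ); max{β/2, (β/(24σ))(1 − 16κ₁/β − √ς)} < τ < (β/(24σ))(1 − 16κ₁/β + √ς). Then min{C₂, C₃, C₄} > 0, and there exist real numbers γ₁ ≠ 0 and γ₂ ≠ 0 such that 1/γ₁ − κ₁/(2γ₁²) = 1/β and 1/γ₂ − κ₁/(2γ₂²) = 2/β. -/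
/-!
The constant `C₂` is a concave quadratic in `τ`: multiplied by `48σβ` it equals
`β²ς − (24στ − β + 16κ₁)²`, so it is positive exactly on the open interval of radius
`β√ς / (24σ)` around `(β − 16κ₁)/(24σ)`, which is the window for `τ` in criterion (30).
`C₃ > 0` is the bound on `μ` rearranged. The equation
`1/γ − κ/(2γ²) = c` is the quadratic `cγ² − γ + κ/2 = 0`, which has a nonzero real root as soon
as `2cκ ≤ 1`; for `c = 1/β` and `c = 2/β` this follows from `ς > 0`, which forces `4κ₁ ≤ β`.
-/

theorem exists_ne_zero_one_div_sub_div_sq_eq {κ c : ℝ} (hc : 0 < c) (h : 2*c*κ ≤ 1) :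
    ∃ γ : ℝ, γ ≠ 0 ∧ 1/γ - κ/(2*γ^2) = c := by
  set t := Real.sqrt (1 - 2*c*κ)
  have ht : t^2 = 1 - 2*c*κ := Real.sq_sqrt (by linarith)
  have ht0 : 0 ≤ t := Real.sqrt_nonneg _
  refine ⟨(1 + t)/(2*c), by positivity, ?_⟩
  have : 1 + t ≠ 0 := by positivity
  field_simp
  linear_combination -ht

noncomputable section

namespace ParameterSelection

variable (κ₁ σ β τ : ℝ)

/-- The quantity `ς` of criterion (30). -/
def slack : ℝ := 1 - 32*κ₁/β - 128*κ₁^2/β^2 - 24*κ₁*σ/β - 24*σ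

def C₂ : ℝ := τ - (κ₁+β)/2 - 4*σ*τ^2/β - 8*(σ*τ+κ₁)^2/(σ*β)

variable {κ₁ σ β τ}

theorem sq_mul_slack_sub_sq_eq (hσ : σ ≠ 0) (hβ : β ≠ 0) :
    β^2 * slack κ₁ σ β - (24*σ*τ - β + 16*κ₁)^2 = 48*σ*β * C₂ κ₁ σ β τ := by
  unfold slack C₂
  field_simp
  ring

theorem C₂_pos_of_abs_lt (hσ : 0 < σ) (hβ : 0 < β)
    (h : |24*σ*τ - β + 16*κ₁| < β * Real.sqrt (slack κ₁ σ β)) : 0 < C₂ κ₁ σ β τ := by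
  have hsq : (24*σ*τ - β + 16*κ₁)^2 < β^2 * slack κ₁ σ β := by
    have hslack : 0 ≤ slack κ₁ σ β := by
      by_contra! hneg
      rw [Real.sqrt_eq_zero_of_nonpos hneg.le, mul_zero] at h
      exact (abs_nonneg _).not_gt h
    calc (24*σ*τ - β + 16*κ₁)^2 = |24*σ*τ - β + 16*κ₁|^2 := (sq_abs _).symm
      _ < (β * Real.sqrt (slack κ₁ σ β))^2 := pow_lt_pow_left₀ h (abs_nonneg _) two_ne_zero
      _ = β^2 * slack κ₁ σ β := by rw [mul_pow, Real.sq_sqrt hslack]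
  have h48 : 0 < 48*σ*β * C₂ κ₁ σ β τ := by
    rw [← sq_mul_slack_sub_sq_eq hσ.ne' hβ.ne']
    linarith
  exact pos_of_mul_pos_right h48 (by positivity)

theorem abs_lt_of_mem_window (hσ : 0 < σ) (hβ : 0 < β) {s : ℝ}
    (h₁ : β/(24*σ) * (1 - 16*κ₁/β - s) < τ) (h₂ : τ < β/(24*σ) * (1 - 16*κ₁/β + s)) :
    |24*σ*τ - β + 16*κ₁| < β * s := by
  have h24σ : 0 < 24*σ := by positivity
  have e₁ : β/(24*σ) * (1 - 16*κ₁/β - s) = (β - 16*κ₁ - β*s) / (24*σ) := by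
    field_simp
  have e₂ : β/(24*σ) * (1 - 16*κ₁/β + s) = (β - 16*κ₁ + β*s) / (24*σ) := by
    field_simp
  rw [e₁, div_lt_iff₀ h24σ] at h₁
  rw [e₂, lt_div_iff₀ h24σ] at h₂
  rw [abs_lt]
  constructor <;> linarith

theorem four_mul_le_of_slack_pos (hσ : 0 ≤ σ) (hβ : 0 < β) (h : 0 < slack κ₁ σ β) :
    4*κ₁ ≤ β := by
  have hβς : 0 < β^2 - 32*κ₁*β - 128*κ₁^2 - 24*κ₁*σ*β - 24*σ*β^2 := by
    have e : β^2 * slack κ₁ σ β = β^2 - 32*κ₁*β - 128*κ₁^2 - 24*κ₁*σ*β - 24*σ*β^2 := by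
      unfold slack
      field_simp
    rw [← e]
    positivity
  by_contra! hlt
  nlinarith [mul_nonneg hσ hβ.le, mul_pos hβ hβ]

end ParameterSelection

end

open ParameterSelection

theorem parameter_selection_criterion_consequences_general
    (κ₁ κ₂ κ₃ σ β μ τ : ℝ)
    (hβ0 : 0 < β)
    (hσ0 : 0 < σ)
    (hς : 0 < 1 - 32*κ₁/β - 128*κ₁^2/β^2 - 24*κ₁*σ/β - 24*σ)
    (hμ : μ > κ₂ + 16*κ₃^2/(σ*β))
    (hτ1 : max (β/2)
        ((β/(24*σ)) * (1 - 16*κ₁/β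
          - Real.sqrt (1 - 32*κ₁/β - 128*κ₁^2/β^2 - 24*κ₁*σ/β - 24*σ))) < τ)
    (hτ2 : τ < (β/(24*σ)) * (1 - 16*κ₁/β
          + Real.sqrt (1 - 32*κ₁/β - 128*κ₁^2/β^2 - 24*κ₁*σ/β - 24*σ))) :
    0 < min (min (τ - (κ₁+β)/2 - 4*σ*τ^2/β - 8*(σ*τ+κ₁)^2/(σ*β))
        ((μ-κ₂)/2 - 8*κ₃^2/(σ*β))) (1/(σ*β)) ∧
    ∃ γ₁ γ₂ : ℝ, γ₁ ≠ 0 ∧ γ₂ ≠ 0 ∧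
      1/γ₁ - κ₁/(2*γ₁^2) = 1/β ∧ 1/γ₂ - κ₁/(2*γ₂^2) = 2/β := by
  have hτ : |24*σ*τ - β + 16*κ₁| < β * Real.sqrt (slack κ₁ σ β) :=
    abs_lt_of_mem_window hσ0 hβ0 ((le_max_right _ _).trans_lt hτ1) hτ2
  have hC₂ : 0 < C₂ κ₁ σ β τ := C₂_pos_of_abs_lt hσ0 hβ0 hτ
  have hC₃ : 0 < (μ-κ₂)/2 - 8*κ₃^2/(σ*β) := by
    linarith [show 16*κ₃^2/(σ*β) = 2*(8*κ₃^2/(σ*β)) by ring]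
  refine ⟨lt_min (lt_min hC₂ hC₃) (by positivity), ?_⟩
  have hκ₁ : 4*κ₁ ≤ β := four_mul_le_of_slack_pos hσ0.le hβ0 hς
  obtain ⟨γ₁, hγ₁, e₁⟩ := exists_ne_zero_one_div_sub_div_sq_eq (κ := κ₁) (c := 1/β)
    (by positivity) (by rw [mul_one_div, div_mul_eq_mul_div, div_le_one hβ0]; linarith)
  obtain ⟨γ₂, hγ₂, e₂⟩ := exists_ne_zero_one_div_sub_div_sq_eq (κ := κ₁) (c := 2/β)
    (by positivity) (by rw [← mul_div_assoc, div_mul_eq_mul_div, div_le_one hβ0]; linarith)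
  exact ⟨γ₁, γ₂, hγ₁, hγ₂, e₁, e₂⟩

/-- **Lemma 4.2**: under the parameter selection criterion (30), the descent constants
`C₂, C₃, C₄` are all positive, and there exist `γ₁, γ₂ ≠ 0` with
`1/γ₁ − κ₁/(2γ₁²) = 1/β` and `1/γ₂ − κ₁/(2γ₂²) = 2/β`. -/
theorem parameter_selection_criterion_consequences
    (κ₁ κ₂ κ₃ σ β μ τ : ℝ)
    (hκ₁ : 0 ≤ κ₁) (hκ₂ : 0 ≤ κ₂) (hκ₃ : 0 ≤ κ₃)
    (hβ0 : 0 < β) (hμ0 : 0 < μ) (hτ0 : 0 < τ)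
    (hσ0 : 0 < σ) (hσ : σ < 1/24)
    (hς : 0 < 1 - 32*κ₁/β - 128*κ₁^2/β^2 - 24*κ₁*σ/β - 24*σ)
    (hβ : β > (4*κ₁/(1 - 24*σ)) * (4 + 3*σ + Real.sqrt (24 - 168*σ + 9*σ^2)))
    (hμ : μ > κ₂ + 16*κ₃^2/(σ*β))
    (hτ1 : max (β/2)
        ((β/(24*σ)) * (1 - 16*κ₁/β
          - Real.sqrt (1 - 32*κ₁/β - 128*κ₁^2/β^2 - 24*κ₁*σ/β - 24*σ))) < τ)
    (hτ2 : τ < (β/(24*σ)) * (1 - 16*κ₁/β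
          + Real.sqrt (1 - 32*κ₁/β - 128*κ₁^2/β^2 - 24*κ₁*σ/β - 24*σ))) :
    0 < min (min (τ - (κ₁+β)/2 - 4*σ*τ^2/β - 8*(σ*τ+κ₁)^2/(σ*β))
        ((μ-κ₂)/2 - 8*κ₃^2/(σ*β))) (1/(σ*β)) ∧
    ∃ γ₁ γ₂ : ℝ, γ₁ ≠ 0 ∧ γ₂ ≠ 0 ∧
      1/γ₁ - κ₁/(2*γ₁^2) = 1/β ∧ 1/γ₂ - κ₁/(2*γ₂^2) = 2/β :=
  parameter_selection_criterion_consequences_general κ₁ κ₂ κ₃ σ β μ τ hβ0 hσ0 hς hμ hτ1 hτ2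
end

section
/- In the PALM setting, for every n ≥ 0 the iterates satisfy the identity u_{n+1} = (1 − 1/σ)(u_{n+1} − u_n) + ((τ − β)·Id − ρ𝒜ᵀ𝒜)(W̃_n − W̃_{n+1}) − ρ𝒜ᵀ(𝒜W̃_{n+1} + ℬP̃_{n+1}). Consequently, if in addition 0 < β ≤ 2τ and 0 < σ ≤ 1, then ‖u_{n+1}‖ ≤ (1/σ − 1)‖u_{n+1} − u_n‖ + (τ + κ₁)‖W̃_{n+1} − W̃_n‖ + ρ‖𝒜ᵀ(𝒜W̃_{n+1} + ℬP̃_{n+1})‖. -/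
/-!
Eliminating `z_{n+1}` between the two updates gives `u_n + β(W_{n+1} - z_{n+1})` in two ways:
as `u_{n+1} - (1 - 1/σ)(u_{n+1} - u_n)` from the dual step, and as
`(τ - β)(W_n - W_{n+1}) - ∇H(W_n)` from the primal step. Splitting the gradient at `W_{n+1}`,
`∇H(W_n) = ρ𝒜ᵀ𝒜(W_n - W_{n+1}) + ∇H(W_{n+1})`, yields the identity. The bound is then the
triangle inequality, with `|τ - β| ≤ τ` because `0 < β ≤ 2τ`, and `1 - 1/σ ≤ 0` because `σ ≤ 1`.
-/

open Matrix

noncomputable section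

theorem dual_update_eq {E : Type*} [AddCommGroup E] [Module ℝ E] {τ σ β : ℝ}
    (hτ : τ ≠ 0) (hσ : σ ≠ 0) {W W' u u' z g : E}
    (hW : W' = W - τ⁻¹ • (g + u + β • (W - z))) (hu : u' = u + (σ * β) • (W' - z)) :
    u' = (1 - 1 / σ) • (u' - u) + (τ - β) • (W - W') - g := by
  subst hu hW
  match_scalars <;> field_simp <;> ring

theorem dual_update_eq_of_gradient_step {ι κ ν : Type*} [Fintype ι] [Fintype κ] [Fintype ν]
    (A : Matrix κ ι ℝ) (B : Matrix κ ν ℝ) {ρ τ σ β : ℝ} (hτ : τ ≠ 0) (hσ : σ ≠ 0)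
    {W W' u u' z : ι → ℝ} {p : ν → ℝ}
    (hW : W' = W - τ⁻¹ • (ρ • (Aᵀ *ᵥ (A *ᵥ W + B *ᵥ p)) + u + β • (W - z)))
    (hu : u' = u + (σ * β) • (W' - z)) :
    u' = (1 - 1 / σ) • (u' - u) + ((τ - β) • (W - W') - ρ • ((Aᵀ * A) *ᵥ (W - W')))
      - ρ • (Aᵀ *ᵥ (A *ᵥ W' + B *ᵥ p)) := by
  refine (dual_update_eq hτ hσ hW hu).trans ?_
  simp only [mulVec_add, mulVec_sub, ← mulVec_mulVec]
  module

theorem norm_smul_sub_smul_apply_le {E : Type*} [SeminormedAddCommGroup E] [NormedSpace ℝ E]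
    (T : E →L[ℝ] E) {τ β ρ : ℝ} (hβ : 0 ≤ β) (hβτ : β ≤ 2 * τ) (hρ : 0 ≤ ρ) (d : E) :
    ‖(τ - β) • d - ρ • T d‖ ≤ (τ + ρ * ‖T‖) * ‖d‖ := by
  have hτβ : |τ - β| ≤ τ := abs_le.2 ⟨by linarith, by linarith⟩
  calc ‖(τ - β) • d - ρ • T d‖ ≤ |τ - β| * ‖d‖ + ρ * (‖T‖ * ‖d‖) := by
        refine (norm_sub_le _ _).trans (add_le_add ?_ ?_)
        · rw [norm_smul, Real.norm_eq_abs]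
        · rw [norm_smul, Real.norm_of_nonneg hρ]
          exact mul_le_mul_of_nonneg_left (T.le_opNorm d) hρ
    _ ≤ τ * ‖d‖ + ρ * (‖T‖ * ‖d‖) := by gcongr
    _ = (τ + ρ * ‖T‖) * ‖d‖ := by ring

theorem norm_dual_update_le {E : Type*} [SeminormedAddCommGroup E] [NormedSpace ℝ E]
    (T : E →L[ℝ] E) {τ β ρ σ : ℝ} (hβ : 0 ≤ β) (hβτ : β ≤ 2 * τ) (hρ : 0 ≤ ρ)
    (hσ0 : 0 < σ) (hσ1 : σ ≤ 1) (a d c : E) :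
    ‖(1 - 1 / σ) • a + ((τ - β) • d - ρ • T d) - ρ • c‖
      ≤ (1 / σ - 1) * ‖a‖ + (τ + ρ * ‖T‖) * ‖d‖ + ρ * ‖c‖ := by
  have hσ : 0 ≤ 1 / σ - 1 := by rw [sub_nonneg, le_div_iff₀ hσ0]; linarith
  calc _ ≤ ‖(1 - 1 / σ) • a‖ + ‖(τ - β) • d - ρ • T d‖ + ‖ρ • c‖ :=
        norm_sub_le_of_le (norm_add_le _ _) le_rfl
    _ ≤ _ := by
      gcongr
      · rw [norm_smul, Real.norm_eq_abs, abs_sub_comm, abs_of_nonneg hσ]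
      · exact norm_smul_sub_smul_apply_le T hβ hβτ hρ d
      · rw [norm_smul, Real.norm_of_nonneg hρ]

theorem enorm'_eq_norm_toLp {ι : Type*} [Fintype ι] (v : ι → ℝ) :
    enorm' v = ‖WithLp.toLp 2 v‖ := by
  simp [enorm', EuclideanSpace.norm_eq, dotProduct, ← sq]

theorem toLp_mulVec {ι κ : Type*} [Fintype ι] [Fintype κ] [DecidableEq ι]
    (A : Matrix κ ι ℝ) (v : ι → ℝ) :
    WithLp.toLp 2 (A *ᵥ v)
      = LinearMap.toContinuousLinearMap (toEuclideanLin A) (WithLp.toLp 2 v) :=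
  rfl

theorem PALM_dual_variable_identity_and_bound_general
    (m n Nstar : ℕ)
    (𝒜 : Matrix (Fin Nstar ⊕ (Fin m × Fin n)) ((Fin n ⊕ Fin m) × (Fin n ⊕ Fin m)) ℝ)
    (ℬ : Matrix (Fin Nstar ⊕ (Fin m × Fin n)) (Fin m × Fin n) ℝ)
    (ρ β τ σ : ℝ)
    (hρ : 0 < ρ) (hβ : 0 < β) (hτ : 0 < τ) (hσ0 : 0 < σ) (hσ1 : σ ≤ 1)
    (W : ℕ → (Fin n ⊕ Fin m) × (Fin n ⊕ Fin m) → ℝ)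
    (P : ℕ → Fin m × Fin n → ℝ)
    (z : ℕ → (Fin n ⊕ Fin m) × (Fin n ⊕ Fin m) → ℝ)
    (u : ℕ → (Fin n ⊕ Fin m) × (Fin n ⊕ Fin m) → ℝ)
    (hW : ∀ nn, W (nn+1) = W nn - τ⁻¹ •
      (ρ • (𝒜ᵀ *ᵥ (𝒜 *ᵥ W nn + ℬ *ᵥ P (nn+1))) + u nn + β • (W nn - z (nn+1))))
    (hu : ∀ nn, u (nn+1) = u nn + (σ * β) • (W (nn+1) - z (nn+1))) :
    (∀ nn : ℕ,
      u (nn+1) = (1 - 1/σ) • (u (nn+1) - u nn)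
        + ((τ - β) • (W nn - W (nn+1)) - ρ • ((𝒜ᵀ * 𝒜) *ᵥ (W nn - W (nn+1))))
        - ρ • (𝒜ᵀ *ᵥ (𝒜 *ᵥ W (nn+1) + ℬ *ᵥ P (nn+1)))) ∧
    (β ≤ 2 * τ → ∀ nn : ℕ,
      enorm' (u (nn+1)) ≤ (1/σ - 1) * enorm' (u (nn+1) - u nn)
        + (τ + ρ * spectralNorm' (𝒜ᵀ * 𝒜)) * enorm' (W (nn+1) - W nn)
        + ρ * enorm' (𝒜ᵀ *ᵥ (𝒜 *ᵥ W (nn+1) + ℬ *ᵥ P (nn+1)))) := by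
  have identity nn := dual_update_eq_of_gradient_step 𝒜 ℬ hτ.ne' hσ0.ne' (hW nn) (hu nn)
  refine ⟨identity, fun hβτ nn => ?_⟩
  nth_rewrite 1 [identity nn]
  simp only [enorm'_eq_norm_toLp, WithLp.toLp_add, WithLp.toLp_sub, WithLp.toLp_smul, toLp_mulVec]
  rw [norm_sub_rev (WithLp.toLp 2 (W (nn+1)))]
  exact norm_dual_update_le _ hβ.le hβτ hρ.le hσ0 hσ1 _ _ _

/-- **Key intermediate steps in the Appendix proof of Theorem 4.3**: the PALM iterates
satisfy the identity
`u_{n+1} = (1 − 1/σ)(u_{n+1} − u_n) + ((τ−β)Id − ρ𝒜ᵀ𝒜)(W̃_n − W̃_{n+1}) − ρ𝒜ᵀ(𝒜W̃_{n+1} + ℬP̃_{n+1})`,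
and consequently, if `0 < β ≤ 2τ` and `0 < σ ≤ 1`, the bound
`‖u_{n+1}‖ ≤ (1/σ − 1)‖u_{n+1} − u_n‖ + (τ + κ₁)‖W̃_{n+1} − W̃_n‖ + ρ‖𝒜ᵀ(𝒜W̃_{n+1} + ℬP̃_{n+1})‖`. -/
theorem PALM_dual_variable_identity_and_bound
    (m n Nstar : ℕ) (hm : 0 < m) (hn : 0 < n)
    (𝒜 : Matrix (Fin Nstar ⊕ (Fin m × Fin n)) ((Fin n ⊕ Fin m) × (Fin n ⊕ Fin m)) ℝ)
    (ℬ : Matrix (Fin Nstar ⊕ (Fin m × Fin n)) (Fin m × Fin n) ℝ)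
    (hℬ : ℬ = Matrix.fromRows 0 (-1))
    (ρ μ β τ σ : ℝ)
    (hρ : 0 < ρ) (hμ : 0 < μ) (hβ : 0 < β) (hτ : 0 < τ) (hσ0 : 0 < σ) (hσ1 : σ ≤ 1)
    (W : ℕ → (Fin n ⊕ Fin m) × (Fin n ⊕ Fin m) → ℝ)
    (P : ℕ → Fin m × Fin n → ℝ)
    (z : ℕ → (Fin n ⊕ Fin m) × (Fin n ⊕ Fin m) → ℝ)
    (u : ℕ → (Fin n ⊕ Fin m) × (Fin n ⊕ Fin m) → ℝ)
    (hW : ∀ nn, W (nn+1) = W nn - τ⁻¹ •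
      (ρ • (𝒜ᵀ *ᵥ (𝒜 *ᵥ W nn + ℬ *ᵥ P (nn+1))) + u nn + β • (W nn - z (nn+1))))
    (hu : ∀ nn, u (nn+1) = u nn + (σ * β) • (W (nn+1) - z (nn+1))) :
    (∀ nn : ℕ,
      u (nn+1) = (1 - 1/σ) • (u (nn+1) - u nn)
        + ((τ - β) • (W nn - W (nn+1)) - ρ • ((𝒜ᵀ * 𝒜) *ᵥ (W nn - W (nn+1))))
        - ρ • (𝒜ᵀ *ᵥ (𝒜 *ᵥ W (nn+1) + ℬ *ᵥ P (nn+1)))) ∧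
    (β ≤ 2 * τ → ∀ nn : ℕ,
      enorm' (u (nn+1)) ≤ (1/σ - 1) * enorm' (u (nn+1) - u nn)
        + (τ + ρ * spectralNorm' (𝒜ᵀ * 𝒜)) * enorm' (W (nn+1) - W nn)
        + ρ * enorm' (𝒜ᵀ *ᵥ (𝒜 *ᵥ W (nn+1) + ℬ *ᵥ P (nn+1)))) :=
  PALM_dual_variable_identity_and_bound_general m n Nstar 𝒜 ℬ ρ β τ σ hρ hβ hτ hσ0 hσ1 W P z u hW hu
end
end
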